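/- arXiv:2006.00769 — 8 statements merged into one kernel-verified Lean document; each statement's English description precedes it below -/
import Mathlib

section
/- Let F be a positive C² function on an open rectangle D = D₁ × ⋯ × Dₙ ⊆ ℝⁿ. Then F is MTP₂ on D (i.e., F(x∨y)F(x∧y) ≥ F(x)F(y) for all x, y ∈ D) if and only if ∂²/∂xᵢ∂xⱼ (log F) ≥ 0 on D for all i ≠ j. -/
/-!
Taking logarithms, `F` is MTP₂ iff `g = log F` is supermodular. On a box, supermodularity is
equivalent to increasing differences in every pair of coordinates (Topkis): one direction is the
special case of two points that differ in two coordinates, the other moves one point to the other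
one coordinate at a time. For a `C²` function, increasing differences in the coordinates `i ≠ j`
means that `∂ᵢ g` is monotone in `xⱼ`, i.e. that `∂ⱼ∂ᵢ g ≥ 0`.
-/

open Function Set Filter Topology

def SupermodularOn {β : Type*} [Lattice β] (g : β → ℝ) (D : Set β) : Prop :=
  ∀ x ∈ D, ∀ y ∈ D, g x + g y ≤ g (x ⊔ y) + g (x ⊓ y)

theorem supermodularOn_log_iff {β : Type*} [Lattice β] {F : β → ℝ} {D : Set β}
    (hD : IsSublattice D) (hF : ∀ x ∈ D, 0 < F x) :
    SupermodularOn (fun x => Real.log (F x)) D ↔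
      ∀ x ∈ D, ∀ y ∈ D, F x * F y ≤ F (x ⊔ y) * F (x ⊓ y) := by
  refine forall₂_congr fun x hx => forall₂_congr fun y hy => ?_
  have := hF x hx
  have := hF y hy
  have := hF _ (hD.supClosed hx hy)
  have := hF _ (hD.infClosed hx hy)
  rw [← Real.log_mul (by positivity) (by positivity),
    ← Real.log_mul (by positivity) (by positivity), Real.log_le_log_iff (by positivity)
    (by positivity)]

lemma update_mem_univ_pi {ι : Type*} {α : ι → Type*} [DecidableEq ι] {Ds : ∀ i, Set (α i)}
    {a : ∀ i, α i} (ha : a ∈ univ.pi Ds) {i : ι} {s : α i} (hs : s ∈ Ds i) :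
    update a i s ∈ univ.pi Ds :=
  (update_mem_pi_iff_of_mem ha).2 fun _ => hs

section Lattice

variable {ι α : Type*} [DecidableEq ι] [LinearOrder α]

def HasIncreasingDifferencesOn (g : (ι → α) → ℝ) (Ds : ι → Set α) : Prop :=
  ∀ a ∈ univ.pi Ds, ∀ i j, i ≠ j → ∀ s ∈ Ds i, ∀ s' ∈ Ds i, s ≤ s' →
    ∀ t ∈ Ds j, ∀ t' ∈ Ds j, t ≤ t' →
      g (update (update a i s') j t) + g (update (update a i s) j t') ≤
        g (update (update a i s') j t') + g (update (update a i s) j t)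

variable {g : (ι → α) → ℝ} {Ds : ι → Set α}

lemma SupermodularOn.hasIncreasingDifferencesOn (h : SupermodularOn g (univ.pi Ds)) :
    HasIncreasingDifferencesOn g Ds := by
  intro a ha i j _ s hs s' hs' hss' t ht t' ht' htt'
  convert h _ (update_mem_univ_pi (update_mem_univ_pi ha hs') ht) _
    (update_mem_univ_pi (update_mem_univ_pi ha hs) ht') using 3 <;>
    ext m <;> simp only [Pi.sup_apply, Pi.inf_apply, update_apply] <;> split_ifs <;>
      simp [hss', htt']

variable [Fintype ι]

lemma HasIncreasingDifferencesOn.sub_le_sub (h : HasIncreasingDifferencesOn g Ds)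
    {u v : ι → α} (hu : u ∈ univ.pi Ds) (hv : v ∈ univ.pi Ds) (huv : u ≤ v) {k : ι}
    (hk : u k = v k) {c : α} (hc : c ∈ Ds k) (hkc : u k ≤ c) :
    g (update u k c) - g u ≤ g (update v k c) - g v := by
  suffices ∀ S : Finset ι, ∀ u ∈ univ.pi Ds, u ≤ v → (∀ l ∉ S, u l = v l) → u k = v k →
      u k ≤ c → g (update u k c) - g u ≤ g (update v k c) - g v from
    this Finset.univ u hu huv (by simp) hk hkc
  intro S
  induction S using Finset.induction_on with
  | empty =>
    intro u _ _ hS _ _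
    obtain rfl : u = v := funext fun l => hS l (Finset.notMem_empty l)
    rfl
  | insert l S _ ih =>
    intro u hu huv hS hk hkc
    set u' := update u l (v l)
    have hu'k : u' k = u k := by
      rcases eq_or_ne k l with rfl | hkl
      · simp [u', hk]
      · exact update_of_ne hkl _ _
    have hS' : ∀ m ∉ S, u' m = v m := fun m hm => by
      rcases eq_or_ne m l with rfl | hml
      · simp [u']
      · simp [u', hml, hS m (by simp [hml, hm])]
    refine le_trans ?_ (ih u' (update_mem_univ_pi hu (hv l trivial))
      (update_le_iff.2 ⟨le_rfl, fun m _ => huv m⟩) hS' (hu'k.trans hk) (hu'k ▸ hkc))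
    rcases eq_or_ne k l with rfl | hkl
    · simp [u', ← hk]
    have hu'_self : update u' k (u k) = u' := by rw [← hu'k]; exact update_eq_self k u'
    have := h u hu l k hkl.symm (u l) (hu l trivial) (v l) (hv l trivial) (huv l) (u k)
      (hu k trivial) c hc hkc
    rw [update_eq_self, update_eq_self, hu'_self] at this
    linarith

theorem HasIncreasingDifferencesOn.supermodularOn (h : HasIncreasingDifferencesOn g Ds) :
    SupermodularOn g (univ.pi Ds) := by
  intro x hx y hy
  suffices ∀ S : Finset ι, ∀ y ∈ univ.pi Ds, (∀ l ∉ S, x l ≤ y l) →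
      g x + g y ≤ g (x ⊔ y) + g (x ⊓ y) from this Finset.univ y hy (by simp)
  intro S
  induction S using Finset.induction_on with
  | empty =>
    intro y _ hS
    have hxy : x ≤ y := fun l => hS l (Finset.notMem_empty l)
    rw [sup_of_le_right hxy, inf_of_le_left hxy, add_comm]
  | insert k S _ ih =>
    intro y hy hS
    by_cases hxy : x k ≤ y k
    · refine ih y hy fun l hl => ?_
      rcases eq_or_ne l k with rfl | hlk
      · exact hxy
      · exact hS l (by simp [hlk, hl])
    have hyx : y k ≤ x k := (not_le.1 hxy).le
    set y' := update y k (x k)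
    have hsup : x ⊔ y' = x ⊔ y := by
      ext l
      rcases eq_or_ne l k with rfl | hlk
      · simp [y', hyx]
      · simp [y', hlk]
    have hinf : x ⊓ y' = update (x ⊓ y) k (x k) := by
      ext l
      rcases eq_or_ne l k with rfl | hlk
      · simp [y']
      · simp [y', hlk]
    have hy'_ge : ∀ l ∉ S, x l ≤ y' l := fun l hl => by
      rcases eq_or_ne l k with rfl | hlk
      · simp [y']
      · simpa [y', hlk] using hS l (by simp [hlk, hl])
    have h₁ := ih y' (update_mem_univ_pi hy (hx k trivial)) hy'_ge
    have h₂ := h.sub_le_sub (infClosed_pi (fun i _ => LinearOrder.infClosed (Ds i)) hx hy) hy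
      inf_le_right (k := k) (by simp [hyx]) (hx k trivial) (by simp)
    rw [hsup, hinf] at h₁
    linarith

end Lattice

lemma IsOpen.monotoneOn_of_hasDerivAt_nonneg {f f' : ℝ → ℝ} {s : Set ℝ} (hs : IsOpen s)
    (hs' : s.OrdConnected) (hf : ∀ t ∈ s, HasDerivAt f (f' t) t) (hf' : ∀ t ∈ s, 0 ≤ f' t) :
    MonotoneOn f s :=
  monotoneOn_of_hasDerivWithinAt_nonneg hs'.convex
    (fun t ht => (hf t ht).continuousAt.continuousWithinAt)
    (by rw [hs.interior_eq]; exact fun t ht => (hf t ht).hasDerivWithinAt)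
    (by rwa [hs.interior_eq])

lemma MonotoneOn.nonneg_of_hasDerivAt {f : ℝ → ℝ} {s : Set ℝ} {t d : ℝ} (hf : MonotoneOn f s)
    (hs : s ∈ 𝓝 t) (hd : HasDerivAt f d t) : 0 ≤ d := by
  refine hd.hasDerivWithinAt.nonneg_of_monotoneOn ?_ hf
  rw [AccPt, inf_eq_left.2 (le_principal_iff.2 (mem_nhdsWithin_of_mem_nhds hs))]
  infer_instance

lemma ContDiffOn.differentiableAt_fderiv_apply {E : Type*} [NormedAddCommGroup E]
    [NormedSpace ℝ E] {g : E → ℝ} {s : Set E} (hg : ContDiffOn ℝ 2 g s) (hs : IsOpen s) {z : E}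
    (hz : z ∈ s) (v : E) : DifferentiableAt ℝ (fun w => fderiv ℝ g w v) z :=
  (((hg.fderiv_of_isOpen hs (m := 1) (by norm_num)).differentiableOn (by norm_num)).differentiableAt
    (hs.mem_nhds hz)).clm_apply (differentiableAt_const v)

section Calculus

variable {ι : Type*} [Fintype ι] [DecidableEq ι]

lemma DifferentiableAt.hasDerivAt_comp_update {E : Type*} [NormedAddCommGroup E]
    [NormedSpace ℝ E] {f : (ι → ℝ) → E} {z : ι → ℝ} {i : ι} {t : ℝ}
    (hf : DifferentiableAt ℝ f (update z i t)) :
    HasDerivAt (fun s => f (update z i s)) (fderiv ℝ f (update z i t) (Pi.single i 1)) t :=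
  hf.hasFDerivAt.comp_hasDerivAt t (hasDerivAt_update z i t)

variable {Ds : ι → Set ℝ} {g : (ι → ℝ) → ℝ}

lemma SupermodularOn.mixed_partial_nonneg (hsm : SupermodularOn g (univ.pi Ds))
    (hopen : ∀ i, IsOpen (Ds i)) (hg : ContDiffOn ℝ 2 g (univ.pi Ds)) {i j : ι} (hij : i ≠ j)
    {x : ι → ℝ} (hx : x ∈ univ.pi Ds) :
    0 ≤ fderiv ℝ (fun z => fderiv ℝ g z (Pi.single i 1)) x (Pi.single j 1) := by
  have hD : IsOpen (univ.pi Ds) := isOpen_set_pi finite_univ fun i _ => hopen i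
  have hmono : MonotoneOn (fun τ => fderiv ℝ g (update x j τ) (Pi.single i 1)) (Ds j) := by
    intro t₀ ht₀ t₁ ht₁ ht
    have hdiff : MonotoneOn
        (fun σ => g (update (update x j t₁) i σ) - g (update (update x j t₀) i σ)) (Ds i) := by
      intro σ hσ σ' hσ' hσσ'
      have := hsm.hasIncreasingDifferencesOn x hx i j hij σ hσ σ' hσ' hσσ' t₀ ht₀ t₁ ht₁ ht
      simp only [update_comm hij] at this
      dsimp only
      linarith
    have hderiv : ∀ {τ}, τ ∈ Ds j → HasDerivAt (fun σ => g (update (update x j τ) i σ))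
        (fderiv ℝ g (update x j τ) (Pi.single i 1)) (x i) := fun {τ} hτ => by
      have hx_self : update (update x j τ) i (x i) = update x j τ := by
        rw [update_comm hij.symm, update_eq_self]
      have := ((hg.differentiableOn (by norm_num)).differentiableAt
        (hD.mem_nhds (hx_self ▸ update_mem_univ_pi hx hτ))).hasDerivAt_comp_update
      rwa [hx_self] at this
    simpa [sub_nonneg] using hdiff.nonneg_of_hasDerivAt ((hopen i).mem_nhds (hx i trivial))
      ((hderiv ht₁).sub (hderiv ht₀))
  have hderiv := (hg.differentiableAt_fderiv_apply hD
    (update_mem_univ_pi hx (hx j trivial)) (Pi.single i 1)).hasDerivAt_comp_update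
  rw [update_eq_self] at hderiv
  exact hmono.nonneg_of_hasDerivAt ((hopen j).mem_nhds (hx j trivial)) hderiv

lemma hasIncreasingDifferencesOn_of_mixed_partial_nonneg (hopen : ∀ i, IsOpen (Ds i))
    (hconn : ∀ i, (Ds i).OrdConnected) (hg : ContDiffOn ℝ 2 g (univ.pi Ds))
    (hmix : ∀ i j : ι, i ≠ j → ∀ x ∈ univ.pi Ds,
      0 ≤ fderiv ℝ (fun z => fderiv ℝ g z (Pi.single i 1)) x (Pi.single j 1)) :
    HasIncreasingDifferencesOn g Ds := by
  have hD : IsOpen (univ.pi Ds) := isOpen_set_pi finite_univ fun i _ => hopen i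
  intro a ha i j hij s hs s' hs' hss' t ht t' ht' htt'
  have hmem : ∀ {σ τ}, σ ∈ Ds i → τ ∈ Ds j → update (update a j τ) i σ ∈ univ.pi Ds :=
    fun hσ hτ => update_mem_univ_pi (update_mem_univ_pi ha hτ) hσ
  have hpartial : ∀ τ ∈ Ds j, fderiv ℝ g (update (update a i s) j τ) (Pi.single j 1) ≤
      fderiv ℝ g (update (update a i s') j τ) (Pi.single j 1) := by
    intro τ hτ
    have : MonotoneOn (fun σ => fderiv ℝ g (update (update a j τ) i σ) (Pi.single j 1)) (Ds i) :=
      (hopen i).monotoneOn_of_hasDerivAt_nonneg (hconn i)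
        (fun σ hσ => (hg.differentiableAt_fderiv_apply hD (hmem hσ hτ) _).hasDerivAt_comp_update)
        (fun σ hσ => hmix j i hij.symm _ (hmem hσ hτ))
    simpa only [update_comm hij.symm] using this hs hs' hss'
  have hderiv : ∀ {σ τ}, σ ∈ Ds i → τ ∈ Ds j →
      HasDerivAt (fun τ => g (update (update a i σ) j τ))
        (fderiv ℝ g (update (update a i σ) j τ) (Pi.single j 1)) τ := fun hσ hτ =>
    ((hg.differentiableOn (by norm_num)).differentiableAt
      (hD.mem_nhds (update_mem_univ_pi (update_mem_univ_pi ha hσ) hτ))).hasDerivAt_comp_update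
  have := (hopen j).monotoneOn_of_hasDerivAt_nonneg (hconn j)
    (fun τ hτ => (hderiv hs' hτ).sub (hderiv hs hτ)) (fun τ hτ => sub_nonneg.2 (hpartial τ hτ))
    ht ht' htt'
  simp only [Pi.sub_apply] at this
  linarith

end Calculus

/-- MTP₂ characterization: a positive C² function on an open rectangle is MTP₂
iff all mixed second partial derivatives of its logarithm are nonnegative. -/
theorem stmt_2 {n : ℕ} (Ds : Fin n → Set ℝ)
    (hopen : ∀ i, IsOpen (Ds i)) (hconn : ∀ i, (Ds i).OrdConnected)
    (F : (Fin n → ℝ) → ℝ)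
    (hFpos : ∀ x ∈ Set.univ.pi Ds, 0 < F x)
    (hFC2 : ContDiffOn ℝ 2 F (Set.univ.pi Ds)) :
    (∀ x ∈ Set.univ.pi Ds, ∀ y ∈ Set.univ.pi Ds, F x * F y ≤ F (x ⊔ y) * F (x ⊓ y)) ↔
    (∀ i j : Fin n, i ≠ j → ∀ x ∈ Set.univ.pi Ds,
      0 ≤ fderiv ℝ (fun z => fderiv ℝ (fun w => Real.log (F w)) z (Pi.single i 1)) x
            (Pi.single j 1)) := by
  have hg : ContDiffOn ℝ 2 (fun w => Real.log (F w)) (univ.pi Ds) :=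
    hFC2.log fun z hz => (hFpos z hz).ne'
  rw [← supermodularOn_log_iff (isSublattice_pi fun i _ => LinearOrder.isSublattice _) hFpos]
  exact ⟨fun hsm i j hij x hx => hsm.mixed_partial_nonneg hopen hg hij hx, fun hmix =>
    (hasIncreasingDifferencesOn_of_mixed_partial_nonneg hopen hconn hg hmix).supermodularOn⟩
end

section
/- Let F be a cdf of the mixture form F(x₁,…,xₙ) = ∫_D (∏ₖ Gₖ(xₖ; y)) g(y) dy, where each Gₖ(·; y) is a cdf with density gₖ(·; y) > 0 and g is a probability density on an interval D ⊂ ℝ. If for every k the ratio gₖ(x; y)/Gₖ(x; y) is monotone in y with the same direction of monotonicity for all k, then for all i ≠ j: F·∂²F/∂xᵢ∂xⱼ − (∂F/∂xᵢ)(∂F/∂xⱼ) ≥ 0, hence F is MTP₂. -/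
/-!
If `gₖ/Gₖ` increases in `y`, then for `t ≤ u` the quotient `Gₖ(·; u) / Gₖ(·; t)` increases,
its logarithmic derivative being the difference of the two ratios; hence for `q ≤ p` every
`∏ₖ Gₖ(pₖ; y) / Gₖ(qₖ; y)` increases in `y` (and all decrease in the other case). Writing
`F z = ∫ ρ_z w` with `ρ_z = ∏ₖ Gₖ(zₖ)/Gₖ((x ⊓ y)ₖ)` and `w = ∏ₖ Gₖ((x ⊓ y)ₖ) g`, the identity
`ρ_{x ⊔ y} = ρ_x ρ_y` reduces `F x F y ≤ F (x ⊔ y) F (x ⊓ y)` to Chebyshev's integral inequality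
for the similarly ordered `ρ_x`, `ρ_y`. So `log F` is supermodular: its mixed second differences,
and in the limit its mixed second partials `(F ∂ᵢ∂ⱼF - ∂ᵢF ∂ⱼF) / F²`, are nonnegative.
-/

open MeasureTheory Filter Topology

def Supermodular {α : Type*} [Lattice α] (φ : α → ℝ) : Prop :=
  ∀ x y, φ x + φ y ≤ φ (x ⊔ y) + φ (x ⊓ y)

def IsMTP2 {α : Type*} [Lattice α] (F : α → ℝ) : Prop :=
  ∀ x y, F x * F y ≤ F (x ⊔ y) * F (x ⊓ y)

theorem IsMTP2.supermodular_log {α : Type*} [Lattice α] {F : α → ℝ} (hF : IsMTP2 F)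
    (hpos : ∀ x, 0 < F x) : Supermodular fun x => Real.log (F x) := by
  intro x y
  rw [← Real.log_mul (hpos x).ne' (hpos y).ne', ← Real.log_mul (hpos _).ne' (hpos _).ne']
  exact Real.log_le_log (mul_pos (hpos x) (hpos y)) (hF x y)

section SecondDerivative

variable {E : Type*} [NormedAddCommGroup E] [NormedSpace ℝ E]

theorem tendsto_mixedSecondDifference_div_sq {φ : E → ℝ} {φ' : E → E →L[ℝ] ℝ}
    {φ'' : E →L[ℝ] E →L[ℝ] ℝ} {x : E} (hφ : ∀ z, HasFDerivAt φ (φ' z) z)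
    (hφ' : HasFDerivAt φ' φ'' x) (v w : E) :
    Tendsto (fun h : ℝ => (φ (x + h • v + h • w) - φ (x + h • v) - φ (x + h • w) + φ x) / h ^ 2)
      (𝓝[>] 0) (𝓝 (φ'' v w)) := by
  have taylor (v : E) := convex_univ.taylor_approx_two_segment (fun z _ => hφ z)
    (Set.mem_univ x) hφ'.hasFDerivWithinAt (v := v) (w := w) (by simp) (by simp)
  have remainder := ((taylor v).sub (taylor 0)).tendsto_div_nhds_zero.add_const (φ'' v w)
  rw [zero_add] at remainder
  refine remainder.congr' ?_
  filter_upwards [self_mem_nhdsWithin] with h (hh : 0 < h)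
  simp only [smul_zero, add_zero, map_zero, zero_apply, smul_eq_mul]
  field_simp
  ring

theorem hasFDerivAt_inv_smul_fderiv {F : E → ℝ} {F'' : E →L[ℝ] E →L[ℝ] ℝ} {x : E}
    (hd : DifferentiableAt ℝ F x) (hd2 : HasFDerivAt (fderiv ℝ F) F'' x) (hx : F x ≠ 0) :
    HasFDerivAt (fun z => (F z)⁻¹ • fderiv ℝ F z)
      ((F x)⁻¹ • F'' + (-((F x) ^ 2)⁻¹ • fderiv ℝ F x).smulRight (fderiv ℝ F x)) x :=
  ((hasDerivAt_inv hx).comp_hasFDerivAt x hd.hasFDerivAt).smul hd2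

end SecondDerivative

section Lattice

variable {ι : Type*}

theorem add_smul_sup_add_smul_of_inf_eq_zero (x : ι → ℝ) {v w : ι → ℝ} (hvw : v ⊓ w = 0)
    {h : ℝ} (hh : 0 ≤ h) : (x + h • v) ⊔ (x + h • w) = x + h • v + h • w ∧
      (x + h • v) ⊓ (x + h • w) = x := by
  have hdisj : h • v ⊓ h • w = 0 := by
    funext k
    simpa [← mul_inf₀ hh] using Or.inr (congrFun hvw k)
  constructor
  · rw [← add_sup, add_assoc, ← inf_add_sup (h • v) (h • w), hdisj, zero_add]
  · rw [← add_inf, hdisj, add_zero]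

theorem Pi.single_inf_single_of_ne [DecidableEq ι] {i j : ι} (hij : i ≠ j)
    {a b : ℝ} (ha : 0 ≤ a) (hb : 0 ≤ b) : (Pi.single i a : ι → ℝ) ⊓ Pi.single j b = 0 := by
  funext k
  rw [Pi.inf_apply, Pi.zero_apply]
  by_cases hki : k = i
  · rw [hki, Pi.single_eq_same, Pi.single_eq_of_ne hij]
    exact inf_eq_right.2 ha
  · rw [Pi.single_eq_of_ne hki]
    exact inf_eq_left.2 ((Pi.single_nonneg.2 hb : (0 : ι → ℝ) ≤ Pi.single j b) k)

theorem Supermodular.fderiv_fderiv_nonneg [Fintype ι] {φ : (ι → ℝ) → ℝ}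
    {φ' : (ι → ℝ) → (ι → ℝ) →L[ℝ] ℝ} {φ'' : (ι → ℝ) →L[ℝ] (ι → ℝ) →L[ℝ] ℝ} {x : ι → ℝ}
    (hsm : Supermodular φ) (hφ : ∀ z, HasFDerivAt φ (φ' z) z) (hφ' : HasFDerivAt φ' φ'' x)
    {v w : ι → ℝ} (hvw : v ⊓ w = 0) : 0 ≤ φ'' v w := by
  refine ge_of_tendsto (tendsto_mixedSecondDifference_div_sq hφ hφ' v w) ?_
  filter_upwards [self_mem_nhdsWithin] with h (hh : 0 < h)
  obtain ⟨hsup, hinf⟩ := add_smul_sup_add_smul_of_inf_eq_zero x hvw hh.le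
  have := hsm (x + h • v) (x + h • w)
  rw [hsup, hinf] at this
  exact div_nonneg (by linarith) (sq_nonneg h)

theorem IsMTP2.fderiv_mul_fderiv_le [Fintype ι] {F : (ι → ℝ) → ℝ}
    {F'' : (ι → ℝ) →L[ℝ] (ι → ℝ) →L[ℝ] ℝ} {x : ι → ℝ} (hF : IsMTP2 F) (hpos : ∀ x, 0 < F x)
    (hd : Differentiable ℝ F) (hd2 : HasFDerivAt (fderiv ℝ F) F'' x) {v w : ι → ℝ}
    (hvw : v ⊓ w = 0) : fderiv ℝ F x v * fderiv ℝ F x w ≤ F x * F'' v w := by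
  have hlog := (hF.supermodular_log hpos).fderiv_fderiv_nonneg
    (fun z => (hd z).hasFDerivAt.log (hpos z).ne')
    (hasFDerivAt_inv_smul_fderiv (hd x) hd2 (hpos x).ne') hvw
  have hx := hpos x
  simp only [add_apply, smul_apply, ContinuousLinearMap.smulRight_apply, smul_eq_mul] at hlog
  have key : 0 ≤ (F x * F'' v w - fderiv ℝ F x v * fderiv ℝ F x w) / F x ^ 2 := by
    convert hlog using 1
    field_simp
    ring
  rw [le_div_iff₀ (by positivity), zero_mul] at key
  linarith

end Lattice

theorem div_le_div_of_logDeriv_le {G₁ G₂ g₁ g₂ : ℝ → ℝ} (hG₁ : ∀ x, HasDerivAt G₁ (g₁ x) x)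
    (hG₂ : ∀ x, HasDerivAt G₂ (g₂ x) x) (hpos₁ : ∀ x, 0 < G₁ x) (hpos₂ : ∀ x, 0 < G₂ x)
    (hle : ∀ x, g₁ x / G₁ x ≤ g₂ x / G₂ x) {a b : ℝ} (hab : a ≤ b) :
    G₁ b / G₁ a ≤ G₂ b / G₂ a := by
  have hmono : Monotone fun x => G₂ x / G₁ x := by
    refine monotone_of_hasDerivAt_nonneg (fun x => (hG₂ x).div (hG₁ x) (hpos₁ x).ne') fun x => ?_
    have h := hle x
    rw [div_le_div_iff₀ (hpos₁ x) (hpos₂ x)] at h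
    exact div_nonneg (by linarith) (sq_nonneg _)
  have h : G₂ a / G₁ a ≤ G₂ b / G₁ b := hmono hab
  rw [div_le_div_iff₀ (hpos₁ a) (hpos₁ b)] at h
  rw [div_le_div_iff₀ (hpos₁ a) (hpos₂ a)]
  linarith

theorem prod_div_le_prod_div_of_logDeriv_le {ι : Type*} (s : Finset ι) {G g : ι → ℝ → ℝ → ℝ}
    {t u : ℝ} (hGt : ∀ k x, HasDerivAt (fun x' => G k x' t) (g k x t) x)
    (hGu : ∀ k x, HasDerivAt (fun x' => G k x' u) (g k x u) x)
    (hpost : ∀ k x, 0 < G k x t) (hposu : ∀ k x, 0 < G k x u)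
    (hle : ∀ k x, g k x t / G k x t ≤ g k x u / G k x u) {p q : ι → ℝ} (hqp : q ≤ p) :
    ∏ k ∈ s, G k (p k) t / G k (q k) t ≤ ∏ k ∈ s, G k (p k) u / G k (q k) u :=
  Finset.prod_le_prod (fun k _ => div_nonneg (hpost k _).le (hpost k _).le) fun k _ =>
    div_le_div_of_logDeriv_le (hGt k) (hGu k) (hpost k) (hposu k) (hle k) (hqp k)

theorem apply_sup_mul_apply_inf {α β : Type*} [LinearOrder α] [CommMagma β] (f : α → β)
    (a b : α) : f (a ⊔ b) * f (a ⊓ b) = f a * f b := by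
  rcases le_total a b with h | h
  · rw [sup_eq_right.2 h, inf_eq_left.2 h, mul_comm]
  · rw [sup_eq_left.2 h, inf_eq_right.2 h]

theorem MonovaryOn.setIntegral_mul_setIntegral_le {α : Type*} [MeasurableSpace α]
    {μ : Measure α} [SFinite μ] {s : Set α} (hs : MeasurableSet s) {f g w : α → ℝ}
    (hfg : MonovaryOn f g s) (hw : ∀ t ∈ s, 0 ≤ w t) (hwi : IntegrableOn w s μ)
    (hfi : IntegrableOn (fun t => f t * w t) s μ) (hgi : IntegrableOn (fun t => g t * w t) s μ)
    (hfgi : IntegrableOn (fun t => f t * g t * w t) s μ) :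
    (∫ t in s, f t * w t ∂μ) * (∫ t in s, g t * w t ∂μ) ≤
      (∫ t in s, f t * g t * w t ∂μ) * ∫ t in s, w t ∂μ := by
  set ν := μ.restrict s
  have hcov : 0 ≤ ∫ p : α × α, (f p.1 - f p.2) * (g p.1 - g p.2) * (w p.1 * w p.2) ∂ν.prod ν := by
    refine integral_nonneg_of_ae ?_
    rw [Measure.prod_restrict]
    filter_upwards [ae_restrict_mem (hs.prod hs)] with p ⟨hp₁, hp₂⟩
    exact mul_nonneg (hfg.sub_mul_sub_nonneg hp₂ hp₁) (mul_nonneg (hw _ hp₁) (hw _ hp₂))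
  have I₁ := hfgi.mul_prod hwi
  have I₂ := hfi.mul_prod hgi
  have I₃ := hgi.mul_prod hfi
  have I₄ := hwi.mul_prod hfgi
  have hexpand : (fun p : α × α => (f p.1 - f p.2) * (g p.1 - g p.2) * (w p.1 * w p.2)) =
      fun p => f p.1 * g p.1 * w p.1 * w p.2 - f p.1 * w p.1 * (g p.2 * w p.2)
        - g p.1 * w p.1 * (f p.2 * w p.2) + w p.1 * (f p.2 * g p.2 * w p.2) := by
    funext p; ring
  rw [hexpand, integral_add ?_ I₄, integral_sub ?_ I₃, integral_sub I₁ I₂,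
    integral_prod_mul (fun t => f t * g t * w t) w,
    integral_prod_mul (fun t => f t * w t) (fun t => g t * w t),
    integral_prod_mul (fun t => g t * w t) (fun t => f t * w t),
    integral_prod_mul w (fun t => f t * g t * w t)] at hcov
  · linarith
  · exact I₁.sub I₂
  · exact (I₁.sub I₂).sub I₃

section Mixture

variable {ι : Type*} [Fintype ι] {D : Set ℝ} {G gdens : ι → ℝ → ℝ → ℝ}

theorem monovaryOn_prod_div_of_logDeriv
    (hGcdf : ∀ k, ∀ y ∈ D, ∀ x : ℝ, HasDerivAt (fun x' => G k x' y) (gdens k x y) x)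
    (hGpos : ∀ k, ∀ y ∈ D, ∀ x : ℝ, 0 < G k x y)
    (hmono : (∀ k x, MonotoneOn (fun y => gdens k x y / G k x y) D) ∨
             (∀ k x, AntitoneOn (fun y => gdens k x y / G k x y) D))
    {p p' q : ι → ℝ} (hqp : q ≤ p) (hqp' : q ≤ p') :
    MonovaryOn (fun y => ∏ k, G k (p k) y / G k (q k) y)
      (fun y => ∏ k, G k (p' k) y / G k (q k) y) D := by
  have ratio_le {t u : ℝ} (ht : t ∈ D) (hu : u ∈ D)
      (hle : ∀ k x, gdens k x t / G k x t ≤ gdens k x u / G k x u) {r : ι → ℝ} (hqr : q ≤ r) :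
      ∏ k, G k (r k) t / G k (q k) t ≤ ∏ k, G k (r k) u / G k (q k) u :=
    prod_div_le_prod_div_of_logDeriv_le _ (fun k => hGcdf k t ht) (fun k => hGcdf k u hu)
      (fun k => hGpos k t ht) (fun k => hGpos k u hu) hle hqr
  rcases hmono with hmono | hmono
  · exact MonotoneOn.monovaryOn
      (fun t ht u hu htu => ratio_le ht hu (fun k x => hmono k x ht hu htu) hqp)
      (fun t ht u hu htu => ratio_le ht hu (fun k x => hmono k x ht hu htu) hqp')
  · exact AntitoneOn.monovaryOn
      (fun t ht u hu htu => ratio_le hu ht (fun k x => hmono k x ht hu htu) hqp)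
      (fun t ht u hu htu => ratio_le hu ht (fun k x => hmono k x ht hu htu) hqp')

theorem isMTP2_of_mixture (hD : MeasurableSet D) (g : ℝ → ℝ) (hgnn : ∀ y ∈ D, 0 ≤ g y)
    (hGcdf : ∀ k, ∀ y ∈ D, ∀ x : ℝ, HasDerivAt (fun x' => G k x' y) (gdens k x y) x)
    (hGpos : ∀ k, ∀ y ∈ D, ∀ x : ℝ, 0 < G k x y)
    (hmono : (∀ k x, MonotoneOn (fun y => gdens k x y / G k x y) D) ∨
             (∀ k x, AntitoneOn (fun y => gdens k x y / G k x y) D))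
    {F : (ι → ℝ) → ℝ} (hF : ∀ x : ι → ℝ, F x = ∫ y in D, (∏ k, G k (x k) y) * g y)
    (hFpos : ∀ x, 0 < F x) : IsMTP2 F := by
  intro x y
  set ρ : (ι → ℝ) → ℝ → ℝ := fun z t => ∏ k, G k (z k) t / G k ((x ⊓ y) k) t
  set w : ℝ → ℝ := fun t => (∏ k, G k ((x ⊓ y) k) t) * g t
  have hρw (z : ι → ℝ) : ∀ t ∈ D, (∏ k, G k (z k) t) * g t = ρ z t * w t := by
    intro t ht
    have := Finset.prod_pos fun k (_ : k ∈ Finset.univ) => hGpos k t ht ((x ⊓ y) k)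
    simp only [ρ, w, Finset.prod_div_distrib]
    field_simp
  have hρsup : ∀ t ∈ D, ρ (x ⊔ y) t * w t = ρ x t * ρ y t * w t := by
    intro t ht
    have := Finset.prod_pos fun k (_ : k ∈ Finset.univ) => hGpos k t ht ((x ⊓ y) k)
    have hlattice : (∏ k, G k ((x ⊔ y) k) t) * ∏ k, G k ((x ⊓ y) k) t =
        (∏ k, G k (x k) t) * ∏ k, G k (y k) t := by
      rw [← Finset.prod_mul_distrib, ← Finset.prod_mul_distrib]
      exact Finset.prod_congr rfl fun k _ => apply_sup_mul_apply_inf (G k · t) (x k) (y k)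
    simp only [ρ, w, Finset.prod_div_distrib]
    field_simp
    linear_combination g t * hlattice
  have hinf : F (x ⊓ y) = ∫ t in D, w t := hF _
  have hFρ (z : ι → ℝ) : F z = ∫ t in D, ρ z t * w t := by
    rw [hF z, setIntegral_congr_fun hD (hρw z)]
  have hint (z : ι → ℝ) : IntegrableOn (fun t => ρ z t * w t) D :=
    Integrable.of_integral_ne_zero ((hFρ z).symm.trans_ne (hFpos z).ne')
  have hsup : F (x ⊔ y) = ∫ t in D, ρ x t * ρ y t * w t := by
    rw [hFρ, setIntegral_congr_fun hD hρsup]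
  rw [hFρ x, hFρ y, hsup, hinf]
  exact (monovaryOn_prod_div_of_logDeriv hGcdf hGpos hmono inf_le_left inf_le_right)
    |>.setIntegral_mul_setIntegral_le hD (fun t ht => mul_nonneg (Finset.prod_nonneg
      fun k _ => (hGpos k t ht _).le) (hgnn t ht))
      (Integrable.of_integral_ne_zero (hinf.symm.trans_ne (hFpos _).ne')) (hint x) (hint y)
      ((hint (x ⊔ y)).congr_fun hρsup hD)

end Mixture

theorem stmt_3_general {n : ℕ} (D : Set ℝ) (hD : D.OrdConnected)
    (G gdens : Fin n → ℝ → ℝ → ℝ) (g : ℝ → ℝ)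
    (hgnn : ∀ y ∈ D, 0 ≤ g y)
    (hGcdf : ∀ k, ∀ y ∈ D, ∀ x : ℝ, HasDerivAt (fun x' => G k x' y) (gdens k x y) x)
    (hGpos : ∀ k, ∀ y ∈ D, ∀ x : ℝ, 0 < G k x y)
    (hmono : (∀ k x, MonotoneOn (fun y => gdens k x y / G k x y) D) ∨
             (∀ k x, AntitoneOn (fun y => gdens k x y / G k x y) D))
    (F : (Fin n → ℝ) → ℝ)
    (hF : ∀ x : Fin n → ℝ, F x = ∫ y in D, (∏ k, G k (x k) y) * g y)
    (hFC2 : ContDiff ℝ 2 F) (hFpos : ∀ x, 0 < F x) :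
    (∀ i j : Fin n, i ≠ j → ∀ x : Fin n → ℝ,
      0 ≤ F x * fderiv ℝ (fun z => fderiv ℝ F z (Pi.single i 1)) x (Pi.single j 1) -
            fderiv ℝ F x (Pi.single i 1) * fderiv ℝ F x (Pi.single j 1)) ∧
    (∀ x y : Fin n → ℝ, F x * F y ≤ F (x ⊔ y) * F (x ⊓ y)) := by
  have hMTP2 : IsMTP2 F := isMTP2_of_mixture hD.measurableSet g hgnn hGcdf hGpos hmono hF hFpos
  refine ⟨fun i j hij x => ?_, hMTP2⟩
  have hd2 : DifferentiableAt ℝ (fderiv ℝ F) x :=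
    (hFC2.fderiv_right (m := 1) (by norm_num)).differentiable one_ne_zero x
  have key := hMTP2.fderiv_mul_fderiv_le hFpos (hFC2.differentiable (by norm_num))
    hd2.hasFDerivAt (Pi.single_inf_single_of_ne hij.symm zero_le_one zero_le_one)
  rw [fderiv_clm_apply hd2 (differentiableAt_const _), fderiv_const_apply,
    ContinuousLinearMap.comp_zero, zero_add, ContinuousLinearMap.flip_apply]
  linarith [mul_comm (fderiv ℝ F x (Pi.single i 1)) (fderiv ℝ F x (Pi.single j 1))]

/-- A mixture cdf `F(x) = ∫_D ∏ₖ Gₖ(xₖ; y) g(y) dy` is MTP₂ when all the ratios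
`gₖ(x;y)/Gₖ(x;y)` are monotone in `y` in the same direction. -/
theorem stmt_3 {n : ℕ} (D : Set ℝ) (hD : D.OrdConnected)
    (G gdens : Fin n → ℝ → ℝ → ℝ) (g : ℝ → ℝ)
    (hgnn : ∀ y ∈ D, 0 ≤ g y) (hgint : (∫ y in D, g y) = 1)
    (hGcdf : ∀ k, ∀ y ∈ D, ∀ x : ℝ, HasDerivAt (fun x' => G k x' y) (gdens k x y) x)
    (hGpos : ∀ k, ∀ y ∈ D, ∀ x : ℝ, 0 < G k x y)
    (hgdenspos : ∀ k, ∀ y ∈ D, ∀ x : ℝ, 0 < gdens k x y)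
    (hmono : (∀ k x, MonotoneOn (fun y => gdens k x y / G k x y) D) ∨
             (∀ k x, AntitoneOn (fun y => gdens k x y / G k x y) D))
    (F : (Fin n → ℝ) → ℝ)
    (hF : ∀ x : Fin n → ℝ, F x = ∫ y in D, (∏ k, G k (x k) y) * g y)
    (hFC2 : ContDiff ℝ 2 F) (hFpos : ∀ x, 0 < F x) :
    (∀ i j : Fin n, i ≠ j → ∀ x : Fin n → ℝ,
      0 ≤ F x * fderiv ℝ (fun z => fderiv ℝ F z (Pi.single i 1)) x (Pi.single j 1) -
            fderiv ℝ F x (Pi.single i 1) * fderiv ℝ F x (Pi.single j 1)) ∧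
    (∀ x y : Fin n → ℝ, F x * F y ≤ F (x ⊔ y) * F (x ⊓ y)) :=
  stmt_3_general D hD G gdens g hgnn hGcdf hGpos hmono F hF hFC2 hFpos
end

section
/- Define F(α; z) = Σ_{k≥0} z^k / (Γ(α+k) k!) for α > 0 and z ≥ 0. Then F(α; z)·F(α+1; z) + z·(F(α+2; z)·F(α; z) − F(α+1; z)²) > 0 for all z ≥ 0. -/
/-!
By the multiplication formula (Cauchy product plus Chu–Vandermonde), each product of two `F`'s
is a power series in `z` with coefficients `(μ+ν-1+n)_n / (Γ(μ+n) Γ(ν+n) n!)`. Shifting the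
first series by one index, the left-hand side becomes `1/(Γ(α) Γ(α+1))` plus a series whose
`z^(n+1)` coefficient is `(2α+n)/((n+1)(α+n+1))` times the (positive) `z^n` coefficient of
`F(α+1; z)²`; for `z ≥ 0` every term is therefore nonnegative.
-/

open Finset Polynomial
open scoped Nat

theorem Real.Gamma_add_nat_eq_mul_ascPochhammer {x : ℝ} (hx : ∀ m : ℕ, x ≠ -m) (n : ℕ) :
    Real.Gamma (x + n) = Real.Gamma x * (ascPochhammer ℝ n).eval x := by
  induction n with
  | zero => simp
  | succ n ih =>
    have hxn : x + n ≠ 0 := fun h => hx n (by linarith)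
    rw [Nat.cast_succ, ← add_assoc, Real.Gamma_add_one hxn, ih, ascPochhammer_succ_eval]
    ring

theorem Real.one_le_Gamma {x : ℝ} (hx : 2 ≤ x) : 1 ≤ Real.Gamma x :=
  Real.Gamma_two ▸ Real.Gamma_strictMonoOn_Ici.monotoneOn (Set.mem_Ici.2 le_rfl) hx hx

theorem sum_antidiagonal_choose_mul_ascPochhammer_eval {R : Type*} [CommRing R] (μ ν : R)
    (n : ℕ) :
    ∑ p ∈ antidiagonal n, (n.choose p.1 : R) *
        ((ascPochhammer R p.1).eval (ν + p.2) * (ascPochhammer R p.2).eval (μ + p.1)) =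
      (ascPochhammer R n).eval (μ + ν - 1 + n) := by
  -- for `j + k = n`, `(ν+k)_j` is the falling factorial of `ν+n-1` of length `j`
  have h := Ring.descPochhammer_smeval_add (r := ν + n - 1) (s := μ + n - 1) n
    (Commute.all _ _)
  simp only [descPochhammer_smeval_eq_ascPochhammer, ascPochhammer_smeval_eq_eval] at h
  rw [show μ + ν - 1 + n = ν + n - 1 + (μ + n - 1) - n + 1 by ring, h]
  refine sum_congr rfl fun p hp => ?_
  have hn : (n : R) = p.1 + p.2 := by rw [← mem_antidiagonal.mp hp]; push_cast; ring
  rw [hn, show ν + (p.1 + p.2) - 1 - p.1 + 1 = ν + p.2 by ring,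
    show μ + (p.1 + p.2) - 1 - p.2 + 1 = μ + p.1 by ring]

theorem summable_norm_pow_div_Gamma_mul_factorial (α z : ℝ) :
    Summable fun k : ℕ => ‖z ^ k / (Real.Gamma (α + k) * k !)‖ := by
  refine .of_norm_bounded_eventually_nat (Real.summable_pow_div_factorial ‖z‖) ?_
  filter_upwards [Filter.eventually_ge_atTop ⌈2 - α⌉₊] with k hk
  have hΓ : 1 ≤ Real.Gamma (α + k) := Real.one_le_Gamma (by linarith [Nat.ceil_le.1 hk])
  rw [norm_norm, norm_div, norm_mul, norm_pow, Real.norm_of_nonneg (zero_le_one.trans hΓ),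
    RCLike.norm_natCast]
  exact div_le_div_of_nonneg_left (by positivity) (by positivity)
    (le_mul_of_one_le_left (by positivity) hΓ)

noncomputable def regularized0F1 (α z : ℝ) : ℝ :=
  ∑' k : ℕ, z ^ k / (Real.Gamma (α + k) * k !)

noncomputable def regularized0F1MulCoeff (μ ν : ℝ) (n : ℕ) : ℝ :=
  (ascPochhammer ℝ n).eval (μ + ν - 1 + n) / (Real.Gamma (μ + n) * Real.Gamma (ν + n) * n !)

theorem sum_antidiagonal_pow_div_Gamma_mul_factorial {μ ν : ℝ} (hμ : 0 < μ) (hν : 0 < ν)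
    (z : ℝ) (n : ℕ) :
    ∑ p ∈ antidiagonal n, z ^ p.1 / (Real.Gamma (μ + p.1) * p.1 !) *
        (z ^ p.2 / (Real.Gamma (ν + p.2) * p.2 !)) =
      regularized0F1MulCoeff μ ν n * z ^ n := by
  rw [regularized0F1MulCoeff, ← sum_antidiagonal_choose_mul_ascPochhammer_eval, sum_div,
    sum_mul]
  refine sum_congr rfl fun ⟨j, k⟩ hp => ?_
  obtain rfl : j + k = n := mem_antidiagonal.mp hp
  have hμj := Real.Gamma_add_nat_eq_mul_ascPochhammer (x := μ + j)
    (fun m h => by linarith [m.cast_nonneg (α := ℝ), j.cast_nonneg (α := ℝ)]) k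
  have hνk := Real.Gamma_add_nat_eq_mul_ascPochhammer (x := ν + k)
    (fun m h => by linarith [m.cast_nonneg (α := ℝ), k.cast_nonneg (α := ℝ)]) j
  have hfact := Nat.choose_mul_factorial_mul_factorial (Nat.le_add_right j k)
  rw [Nat.add_sub_cancel_left] at hfact
  have hC : ((j + k).choose j : ℝ) ≠ 0 := mod_cast (Nat.choose_pos (Nat.le_add_right j k)).ne'
  have hPμ := ascPochhammer_pos k (μ + j) (by positivity)
  have hPν := ascPochhammer_pos j (ν + k) (by positivity)
  rw [← hfact, Nat.cast_add, ← add_assoc, hμj, add_comm (j : ℝ), ← add_assoc, hνk]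
  push_cast
  field_simp
  ring

theorem hasSum_regularized0F1_mul {μ ν : ℝ} (hμ : 0 < μ) (hν : 0 < ν) (z : ℝ) :
    HasSum (fun n => regularized0F1MulCoeff μ ν n * z ^ n)
      (regularized0F1 μ z * regularized0F1 ν z) := by
  have hfμ := summable_norm_pow_div_Gamma_mul_factorial μ z
  have hfν := summable_norm_pow_div_Gamma_mul_factorial ν z
  have hs := (summable_norm_sum_mul_antidiagonal_of_summable_norm hfμ hfν).of_norm
  rw [regularized0F1, regularized0F1,
    tsum_mul_tsum_eq_tsum_sum_antidiagonal_of_summable_norm hfμ hfν]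
  simp_rw [sum_antidiagonal_pow_div_Gamma_mul_factorial hμ hν] at hs ⊢
  exact hs.hasSum

theorem regularized0F1MulCoeff_pos {μ ν : ℝ} (hμ : 0 < μ) (hν : 0 < ν) :
    ∀ n, 0 < regularized0F1MulCoeff μ ν n
  | 0 => by simp [regularized0F1MulCoeff]; positivity
  | n + 1 => div_pos (ascPochhammer_pos _ _ (by push_cast; linarith [n.cast_nonneg (α := ℝ)]))
      (by positivity)

theorem regularized0F1MulCoeff_succ_add_sub {α : ℝ} (hα : 0 < α) (n : ℕ) :
    regularized0F1MulCoeff α (α + 1) (n + 1) +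
        (regularized0F1MulCoeff (α + 2) α n - regularized0F1MulCoeff (α + 1) (α + 1) n) =
      (2 * α + n) / ((n + 1) * (α + n + 1)) * regularized0F1MulCoeff (α + 1) (α + 1) n := by
  have hΓ₁ : Real.Gamma (α + 1 + n) = (α + n) * Real.Gamma (α + n) := by
    rw [add_right_comm, Real.Gamma_add_one (by positivity)]
  have hΓ₂ : Real.Gamma (α + 2 + n) = (α + n + 1) * ((α + n) * Real.Gamma (α + n)) := by
    rw [show α + 2 + n = α + 1 + n + 1 by ring, Real.Gamma_add_one (by positivity), hΓ₁]
    ring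
  simp only [regularized0F1MulCoeff, ascPochhammer_succ_eval, Nat.factorial_succ]
  push_cast
  rw [show α + (n + 1) = α + 1 + n by ring, show α + 1 + (n + 1) = α + 2 + n by ring,
    show α + (α + 1) - 1 + (n + 1) = 2 * α + 1 + n by ring,
    show α + 2 + α - 1 + n = 2 * α + 1 + n by ring,
    show α + 1 + (α + 1) - 1 + n = 2 * α + 1 + n by ring, hΓ₁, hΓ₂]
  have hP := ascPochhammer_pos n (2 * α + 1 + n) (by positivity)
  field_simp
  ring

/-- For `F(α;z) = Σ_{k≥0} z^k/(Γ(α+k) k!)`, one has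
`F(α;z)F(α+1;z) + z(F(α+2;z)F(α;z) − F(α+1;z)²) > 0` for all `z ≥ 0`. -/
theorem stmt_7 (α : ℝ) (hα : 0 < α)
    (F : ℝ → ℝ → ℝ)
    (hF : ∀ β z, F β z = ∑' k : ℕ, z ^ k / (Real.Gamma (β + k) * (Nat.factorial k))) :
    ∀ z ≥ (0:ℝ),
      0 < F α z * F (α + 1) z + z * (F (α + 2) z * F α z - (F (α + 1) z) ^ 2) := by
  intro z hz
  obtain rfl : F = regularized0F1 := funext₂ hF
  have hα₁ : 0 < α + 1 := by linarith
  have hα₂ : 0 < α + 2 := by linarith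
  have hA := (hasSum_nat_add_iff' 1).mpr (hasSum_regularized0F1_mul hα hα₁ z)
  have hBC := ((hasSum_regularized0F1_mul hα₂ hα z).sub
    (hasSum_regularized0F1_mul hα₁ hα₁ z)).mul_left z
  have hterm_nonneg (n : ℕ) : 0 ≤ regularized0F1MulCoeff α (α + 1) (n + 1) * z ^ (n + 1) +
      z * (regularized0F1MulCoeff (α + 2) α n * z ^ n -
        regularized0F1MulCoeff (α + 1) (α + 1) n * z ^ n) := by
    calc 0 ≤ z ^ (n + 1) * ((2 * α + n) / ((n + 1) * (α + n + 1)) *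
          regularized0F1MulCoeff (α + 1) (α + 1) n) :=
        mul_nonneg (by positivity) (mul_nonneg (by positivity)
          (regularized0F1MulCoeff_pos hα₁ hα₁ n).le)
      _ = _ := by rw [← regularized0F1MulCoeff_succ_add_sub hα]; ring
  have hrest := hasSum_le hterm_nonneg hasSum_zero (hA.add hBC)
  have hc₀ := regularized0F1MulCoeff_pos hα hα₁ 0
  simp only [range_one, sum_singleton, pow_zero, mul_one] at hrest
  linarith
end

section
/- For any α > 0 and c > 0, the function (x, y) ↦ ₀F₁(α; c·x·y) is strictly TP₂ on (0,∞)², i.e., ∂²/∂x∂y log ₀F₁(α; cxy) > 0 for all x, y > 0. -/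
/-!
Write `F = ₀F₁(α; ·) = ∑ aₙ tⁿ` and `θ = t d/dt`, so that `θʲF(t) = ∑ nʲ aₙ tⁿ`. Since
`∂ₓ log F(cxy) = (θF / F)(cxy) / x`, the mixed partial is `c · θ(θF / F)(t) / t` at `t = cxy`,
and `θ(θF / F) = (F · θ²F - (θF)²) / F²` is the variance of `n` under the weights `aₙ tⁿ / F(t)`,
which is positive because at least two of these weights are.
-/

open Real Filter Topology
open scoped Nat

theorem sq_tsum_mul_lt_tsum_mul_tsum_sq {ι : Type*} {w x : ι → ℝ} (hw : ∀ i, 0 ≤ w i)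
    (h0 : Summable w) (h1 : Summable fun i => x i * w i) (h2 : Summable fun i => x i ^ 2 * w i)
    {i j : ι} (hwi : 0 < w i) (hwj : 0 < w j) (hx : x i ≠ x j) :
    (∑' k, x k * w k) ^ 2 < (∑' k, w k) * ∑' k, x k ^ 2 * w k := by
  set S0 := ∑' k, w k
  set S1 := ∑' k, x k * w k
  set S2 := ∑' k, x k ^ 2 * w k
  have hS0 : 0 < S0 := h0.tsum_pos hw i hwi
  have hvar : Summable fun k => w k * (x k * S0 - S1) ^ 2 :=
    (((h2.mul_left (S0 ^ 2)).sub (h1.mul_left (2 * S0 * S1))).add (h0.mul_left (S1 ^ 2))).congr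
      fun k => by ring
  have hvar_eq : ∑' k, w k * (x k * S0 - S1) ^ 2 = S0 * (S0 * S2 - S1 ^ 2) := by
    calc ∑' k, w k * (x k * S0 - S1) ^ 2
        = ∑' k, (S0 ^ 2 * (x k ^ 2 * w k) - 2 * S0 * S1 * (x k * w k) + S1 ^ 2 * w k) :=
          tsum_congr fun k => by ring
      _ = S0 ^ 2 * S2 - 2 * S0 * S1 * S1 + S1 ^ 2 * S0 := by
          rw [((h2.mul_left _).sub (h1.mul_left _)).tsum_add (h0.mul_left _),
            (h2.mul_left _).tsum_sub (h1.mul_left _), tsum_mul_left, tsum_mul_left, tsum_mul_left]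
      _ = S0 * (S0 * S2 - S1 ^ 2) := by ring
  obtain ⟨k, hwk, hk⟩ : ∃ k, 0 < w k ∧ x k * S0 - S1 ≠ 0 := by
    by_contra! h
    exact hx (mul_right_cancel₀ hS0.ne' (by linarith [h i hwi, h j hwj]))
  have hvar_pos : 0 < S0 * (S0 * S2 - S1 ^ 2) :=
    hvar_eq ▸ hvar.tsum_pos (fun k => mul_nonneg (hw k) (sq_nonneg _)) k
      (mul_pos hwk (sq_pos_of_ne_zero hk))
  linarith [(mul_pos_iff_of_pos_left hS0).mp hvar_pos]

noncomputable def eulerMoment (a : ℕ → ℝ) (j : ℕ) (t : ℝ) : ℝ :=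
  ∑' n : ℕ, (n : ℝ) ^ j * a n * t ^ n

theorem eulerMoment_zero_pos {a : ℕ → ℝ} {t : ℝ} (ht : 0 ≤ t) (ha : ∀ n, 0 ≤ a n)
    (ha0 : 0 < a 0) (hs : Summable fun n : ℕ => (n : ℝ) ^ 0 * a n * t ^ n) :
    0 < eulerMoment a 0 t :=
  hs.tsum_pos (fun n => by have := ha n; positivity) 0 (by simpa using ha0)

theorem sq_eulerMoment_one_lt {a : ℕ → ℝ} {t : ℝ} (ht : 0 < t) (ha : ∀ n, 0 ≤ a n)
    (ha0 : 0 < a 0) (ha1 : 0 < a 1) (hs : ∀ j, Summable fun n : ℕ => (n : ℝ) ^ j * a n * t ^ n) :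
    eulerMoment a 1 t ^ 2 < eulerMoment a 0 t * eulerMoment a 2 t := by
  have key := sq_tsum_mul_lt_tsum_mul_tsum_sq (w := fun n => a n * t ^ n) (x := fun n => (n : ℝ))
    (fun n => by have := ha n; positivity) (by simpa using hs 0) (by simpa [mul_assoc] using hs 1)
    (by simpa [mul_assoc] using hs 2) (i := 0) (j := 1) (by simpa using ha0)
    (by simpa using mul_pos ha1 ht) (by simp)
  simpa [eulerMoment, mul_assoc] using key

theorem hasDerivAt_eulerMoment {a : ℕ → ℝ} {j : ℕ} {t : ℝ}
    (ha : Summable fun n : ℕ => (n : ℝ) ^ j * a n * t ^ n)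
    (ha' : ∀ r, Summable fun n : ℕ => (n : ℝ) ^ (j + 1) * a n * r ^ n) (ht : t ≠ 0) :
    HasDerivAt (eulerMoment a j) (eulerMoment a (j + 1) t / t) t := by
  set R := |t| + 1
  have hR : 1 ≤ R := le_add_of_nonneg_left (abs_nonneg t)
  have ht_mem : t ∈ Metric.ball (0 : ℝ) R := by simp [R]
  have hterm (n : ℕ) : (n : ℝ) ^ (j + 1) * a n * t ^ (n - 1)
      = (n : ℝ) ^ (j + 1) * a n * t ^ n / t := by
    rcases n with _ | n
    · simp
    · rw [Nat.add_sub_cancel, pow_succ t n]; field_simp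
  have hbound (n : ℕ) (y : ℝ) (hy : y ∈ Metric.ball (0 : ℝ) R) :
      ‖(n : ℝ) ^ (j + 1) * a n * y ^ (n - 1)‖ ≤ |(n : ℝ) ^ (j + 1) * a n * R ^ n| := by
    have hyR : |y| ≤ R := by simpa using (Metric.mem_ball.mp hy).le
    rw [Real.norm_eq_abs, abs_mul, abs_mul _ (R ^ n), abs_pow, abs_pow,
      abs_of_pos (by positivity : (0 : ℝ) < R)]
    gcongr
    calc |y| ^ (n - 1) ≤ R ^ (n - 1) := by gcongr
      _ ≤ R ^ n := pow_le_pow_right₀ hR (Nat.sub_le n 1)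
  have hderiv := hasDerivAt_tsum_of_isPreconnected (ha' R).abs Metric.isOpen_ball
    (convex_ball (0 : ℝ) R).isPreconnected
    (g := fun (n : ℕ) (y : ℝ) => (n : ℝ) ^ j * a n * y ^ n)
    (g' := fun (n : ℕ) (y : ℝ) => (n : ℝ) ^ (j + 1) * a n * y ^ (n - 1))
    (fun n y _ => by simpa [pow_succ, mul_assoc, mul_comm, mul_left_comm] using
      (hasDerivAt_pow n y).const_mul ((n : ℝ) ^ j * a n))
    hbound ht_mem ha ht_mem
  simp only [hterm, tsum_div_const] at hderiv
  exact hderiv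

theorem hasDerivAt_log_eulerMoment_zero {a : ℕ → ℝ} {t : ℝ}
    (hs : ∀ j r, Summable fun n : ℕ => (n : ℝ) ^ j * a n * r ^ n) (ht : t ≠ 0)
    (h0 : eulerMoment a 0 t ≠ 0) :
    HasDerivAt (fun t => log (eulerMoment a 0 t))
      (eulerMoment a 1 t / eulerMoment a 0 t / t) t := by
  refine ((hasDerivAt_eulerMoment (hs 0 t) (hs 1) ht).log h0).congr_deriv ?_
  ring

theorem hasDerivAt_eulerMoment_one_div_zero {a : ℕ → ℝ} {t : ℝ}
    (hs : ∀ j r, Summable fun n : ℕ => (n : ℝ) ^ j * a n * r ^ n) (ht : t ≠ 0)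
    (h0 : eulerMoment a 0 t ≠ 0) :
    HasDerivAt (fun t => eulerMoment a 1 t / eulerMoment a 0 t)
      ((eulerMoment a 0 t * eulerMoment a 2 t - eulerMoment a 1 t ^ 2) /
        (t * eulerMoment a 0 t ^ 2)) t := by
  refine ((hasDerivAt_eulerMoment (hs 1 t) (hs 2) ht).fun_div
    (hasDerivAt_eulerMoment (hs 0 t) (hs 1) ht) h0).congr_deriv ?_
  field_simp

theorem summable_pow_mul_mul_pow_of_abs_le {a : ℕ → ℝ} {b : ℝ} (hb : 0 ≤ b)
    (ha : ∀ n, |a n| ≤ b ^ n / n !) (j : ℕ) (r : ℝ) :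
    Summable fun n : ℕ => (n : ℝ) ^ j * a n * r ^ n := by
  refine Summable.of_norm_bounded ((summable_pow_mul_geometric_of_norm_lt_one j
    (r := (1 / 2 : ℝ)) (by norm_num)).mul_left (exp (2 * b * |r|))) fun n => ?_
  have hexp := pow_div_factorial_le_exp (2 * b * |r|) (by positivity) n
  calc ‖(n : ℝ) ^ j * a n * r ^ n‖ = (n : ℝ) ^ j * |a n| * |r| ^ n := by
        rw [Real.norm_eq_abs, abs_mul, abs_mul, abs_pow, abs_pow, Nat.abs_cast]
    _ ≤ (n : ℝ) ^ j * (b ^ n / n !) * |r| ^ n := by gcongr; exact ha n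
    _ = (n : ℝ) ^ j * (1 / 2) ^ n * ((2 * b * |r|) ^ n / n !) := by
        rw [mul_pow, mul_pow, div_pow, one_pow]; field_simp
    _ ≤ (n : ℝ) ^ j * (1 / 2) ^ n * exp (2 * b * |r|) := by gcongr
    _ = exp (2 * b * |r|) * ((n : ℝ) ^ j * (1 / 2) ^ n) := mul_comm _ _

theorem deriv_deriv_comp_mul_mul {f G : ℝ → ℝ} {c x y G' : ℝ} (hc : 0 < c) (hx : 0 < x)
    (hy : 0 < y) (hf : ∀ t, 0 < t → HasDerivAt f (G t / t) t)
    (hG : HasDerivAt G G' (c * x * y)) :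
    deriv (fun y' => deriv (fun x' => f (c * x' * y')) x) y = c * G' := by
  have hinner : ∀ y', 0 < y' → deriv (fun x' => f (c * x' * y')) x = G (c * x * y') / x := by
    intro y' hy'
    have hlin : HasDerivAt (fun x' => c * x' * y') (c * y') x := by
      simpa using ((hasDerivAt_id x).const_mul c).mul_const y'
    have hcomp := (hf _ (by positivity)).comp x hlin
    rw [Function.comp_def] at hcomp
    rw [hcomp.deriv]
    field_simp
  have hlin : HasDerivAt (fun y' => c * x * y') (c * x) y := by
    simpa using (hasDerivAt_id y).const_mul (c * x)
  have hEq : (fun y' => deriv (fun x' => f (c * x' * y')) x) =ᶠ[𝓝 y]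
      fun y' => G (c * x * y') / x := (eventually_gt_nhds hy).mono hinner
  have hcomp := (hG.comp y hlin).div_const x
  rw [Function.comp_def] at hcomp
  rw [hEq.deriv_eq, hcomp.deriv]
  field_simp

noncomputable def hyp0F1Coeff (α : ℝ) (n : ℕ) : ℝ :=
  Gamma α / (Gamma (α + n) * n !)

theorem pow_mul_Gamma_le_Gamma_add_nat {α : ℝ} (hα : 0 < α) (n : ℕ) :
    α ^ n * Gamma α ≤ Gamma (α + n) := by
  induction n with
  | zero => simp
  | succ n ih =>
    rw [Nat.cast_succ, ← add_assoc, Gamma_add_one (by positivity), pow_succ]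
    have hle : α ≤ α + n := le_add_of_nonneg_right n.cast_nonneg
    calc α ^ n * α * Gamma α = α * (α ^ n * Gamma α) := by ring
      _ ≤ (α + n) * Gamma (α + n) := by gcongr

theorem hyp0F1Coeff_pos {α : ℝ} (hα : 0 < α) (n : ℕ) : 0 < hyp0F1Coeff α n := by
  have hΓn := Gamma_pos_of_pos (by positivity : 0 < α + n)
  have hΓ := Gamma_pos_of_pos hα
  unfold hyp0F1Coeff; positivity

theorem hyp0F1Coeff_le {α : ℝ} (hα : 0 < α) (n : ℕ) : hyp0F1Coeff α n ≤ α⁻¹ ^ n / n ! := by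
  have hΓ := Gamma_pos_of_pos hα
  calc hyp0F1Coeff α n ≤ Gamma α / (α ^ n * Gamma α * n !) := by
        unfold hyp0F1Coeff; gcongr; exact pow_mul_Gamma_le_Gamma_add_nat hα n
    _ = α⁻¹ ^ n / n ! := by rw [inv_pow]; field_simp

/-- For `α > 0`, `c > 0`, the function `(x,y) ↦ ₀F₁(α; cxy)` is strictly TP₂ on
`(0,∞)²`: the mixed second partial of its logarithm is positive. -/
theorem stmt_8 (α c : ℝ) (hα : 0 < α) (hc : 0 < c)
    (h : ℝ → ℝ → ℝ)
    (hh : ∀ x y : ℝ, h x y =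
      ∑' k : ℕ, (c * x * y) ^ k * Real.Gamma α / (Real.Gamma (α + k) * (Nat.factorial k))) :
    ∀ x > (0:ℝ), ∀ y > (0:ℝ),
      0 < deriv (fun y' => deriv (fun x' => Real.log (h x' y')) x) y := by
  intro x hx y hy
  set a := hyp0F1Coeff α
  have ha : ∀ n, 0 ≤ a n := fun n => (hyp0F1Coeff_pos hα n).le
  have hs : ∀ j r, Summable fun n : ℕ => (n : ℝ) ^ j * a n * r ^ n :=
    summable_pow_mul_mul_pow_of_abs_le (inv_nonneg.2 hα.le)
      fun n => (abs_of_nonneg (ha n)).trans_le (hyp0F1Coeff_le hα n)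
  have hS0 : ∀ t, 0 < t → 0 < eulerMoment a 0 t := fun t ht =>
    eulerMoment_zero_pos ht.le ha (hyp0F1Coeff_pos hα 0) (hs 0 t)
  obtain rfl : h = fun x' y' => eulerMoment a 0 (c * x' * y') := by
    funext x' y'
    rw [hh]
    exact tsum_congr fun n => by simp only [a, hyp0F1Coeff]; ring
  have ht : 0 < c * x * y := by positivity
  show 0 < deriv (fun y' => deriv (fun x' => (fun t => log (eulerMoment a 0 t)) (c * x' * y')) x) y
  rw [deriv_deriv_comp_mul_mul hc hx hy
    (fun t ht => hasDerivAt_log_eulerMoment_zero hs ht.ne' (hS0 t ht).ne')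
    (hasDerivAt_eulerMoment_one_div_zero hs ht.ne' (hS0 _ ht).ne')]
  have hvar := sq_eulerMoment_one_lt ht ha (hyp0F1Coeff_pos hα 0) (hyp0F1Coeff_pos hα 1)
    fun j => hs j (c * x * y)
  have hS0t := hS0 _ ht
  exact mul_pos hc (div_pos (by linarith) (by positivity))
end

section
/- Let D₁, D₂ be positive definite diagonal matrices, a₁ ∈ ℝ^{n₁}, a₂ ∈ ℝ^{n₂}, qᵢ = aᵢᵀDᵢ⁻¹aᵢ > 0, and for a scalar θ define R_θ as the block matrix with diagonal blocks Dᵢ + aᵢaᵢᵀ and off-diagonal blocks θa₁a₂ᵀ and θa₂a₁ᵀ. If θ² < (1 + q₁⁻¹)(1 + q₂⁻¹) then R_θ is invertible with inverse D⁻¹ − (1/((1+q₁)(1+q₂) − θ²q₁q₂)) · [ (1+(1−θ²)q₂) b₁b₁ᵀ, θ b₁b₂ᵀ ; θ b₂b₁ᵀ, (1+(1−θ²)q₁) b₂b₂ᵀ ], where bᵢ = Dᵢ⁻¹aᵢ and D = D₁ ⊕ D₂. -/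
/-!
Write `R_θ = D + U C Uᵀ` with `U = [a₁ 0; 0 a₂]` and `C = [1 θ; θ 1]`, and put `Q = Uᵀ D⁻¹ U =
diag(q₁, q₂)`. A Woodbury computation, arranged so that `C` need not be invertible, gives
`R_θ⁻¹ = D⁻¹ - det(1 + QC)⁻¹ • D⁻¹ U (C adj(1 + QC)) Uᵀ D⁻¹`: matrices of the form `U M Vᵀ` multiply
like their `2 × 2` cores with `Vᵀ U` inserted, and everything reduces to the `2 × 2` identity
`C adj(1 + QC) + C Q C adj(1 + QC) = det(1 + QC) • C`. For this `C` one has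
`det(1 + QC) = (1 + q₁)(1 + q₂) - θ² q₁ q₂ = q₁ q₂ ((1 + q₁⁻¹)(1 + q₂⁻¹) - θ²) > 0`, and
`C adj(1 + QC)` is the coefficient matrix of the stated formula.
-/

open Matrix

namespace Matrix

section Capacitance

variable {R : Type*} [CommRing R]

theorem add_mul_mul_adjugate {k : Type*} [Fintype k] [DecidableEq k] (C Q : Matrix k k R) :
    C * adjugate (1 + Q * C) + C * Q * (C * adjugate (1 + Q * C)) = det (1 + Q * C) • C := by
  calc C * adjugate (1 + Q * C) + C * Q * (C * adjugate (1 + Q * C))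
      = C * ((1 + Q * C) * adjugate (1 + Q * C)) := by noncomm_ring
    _ = det (1 + Q * C) • C := by rw [mul_adjugate, Matrix.mul_smul, mul_one]

theorem det_one_add_diagonal_mul_fin_two (θ q₁ q₂ : R) :
    det (1 + diagonal ![q₁, q₂] * !![1, θ; θ, 1]) = (1 + q₁) * (1 + q₂) - θ ^ 2 * q₁ * q₂ := by
  simp [det_fin_two, one_fin_two, diagonal_vec2]
  ring

theorem mul_adjugate_one_add_diagonal_mul_fin_two (θ q₁ q₂ : R) :
    !![1, θ; θ, 1] * adjugate (1 + diagonal ![q₁, q₂] * !![1, θ; θ, 1]) =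
      !![1 + (1 - θ ^ 2) * q₂, θ; θ, 1 + (1 - θ ^ 2) * q₁] := by
  ext i j
  fin_cases i <;> fin_cases j <;> simp [adjugate_fin_two, one_fin_two, diagonal_vec2] <;> ring

end Capacitance

section OuterBlocks

variable {R m n : Type*} [CommRing R]

/-- The matrix `U M Vᵀ` with `U = [u₁ 0; 0 u₂]` and `V = [v₁ 0; 0 v₂]`. -/
def outerBlocks (M : Matrix (Fin 2) (Fin 2) R) (u₁ : m → R) (u₂ : n → R) (v₁ : m → R)
    (v₂ : n → R) : Matrix (m ⊕ n) (m ⊕ n) R :=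
  fromBlocks (M 0 0 • vecMulVec u₁ v₁) (M 0 1 • vecMulVec u₁ v₂)
    (M 1 0 • vecMulVec u₂ v₁) (M 1 1 • vecMulVec u₂ v₂)

variable (u₁ v₁ : m → R) (u₂ v₂ : n → R)

theorem outerBlocks_add (M N : Matrix (Fin 2) (Fin 2) R) :
    outerBlocks M u₁ u₂ v₁ v₂ + outerBlocks N u₁ u₂ v₁ v₂ = outerBlocks (M + N) u₁ u₂ v₁ v₂ := by
  simp only [outerBlocks, fromBlocks_add, add_apply, add_smul]

theorem outerBlocks_sub (M N : Matrix (Fin 2) (Fin 2) R) :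
    outerBlocks M u₁ u₂ v₁ v₂ - outerBlocks N u₁ u₂ v₁ v₂ = outerBlocks (M - N) u₁ u₂ v₁ v₂ := by
  ext (i | i) (j | j) <;> simp [outerBlocks, sub_mul]

theorem smul_outerBlocks (s : R) (M : Matrix (Fin 2) (Fin 2) R) :
    s • outerBlocks M u₁ u₂ v₁ v₂ = outerBlocks (s • M) u₁ u₂ v₁ v₂ := by
  simp only [outerBlocks, fromBlocks_smul, smul_apply, smul_smul, smul_eq_mul]

@[simp]
theorem outerBlocks_zero : outerBlocks 0 u₁ u₂ v₁ v₂ = 0 := by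
  simp [outerBlocks]

variable [Fintype m] [Fintype n]

theorem outerBlocks_mul_outerBlocks (M N : Matrix (Fin 2) (Fin 2) R) (w₁ x₁ : m → R)
    (w₂ x₂ : n → R) :
    outerBlocks M u₁ u₂ v₁ v₂ * outerBlocks N w₁ w₂ x₁ x₂ =
      outerBlocks (M * diagonal ![v₁ ⬝ᵥ w₁, v₂ ⬝ᵥ w₂] * N) u₁ u₂ x₁ x₂ := by
  simp only [outerBlocks, fromBlocks_multiply, Matrix.smul_mul, Matrix.mul_smul,
    vecMulVec_mul_vecMulVec, vecMulVec_smul, smul_smul, ← add_smul]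
  congr 1 <;> congr 1 <;> simp [mul_apply, Fin.sum_univ_two] <;> ring

theorem fromBlocks_mul_outerBlocks (A₁ : Matrix m m R) (A₂ : Matrix n n R)
    (M : Matrix (Fin 2) (Fin 2) R) :
    fromBlocks A₁ 0 0 A₂ * outerBlocks M u₁ u₂ v₁ v₂ =
      outerBlocks M (A₁ *ᵥ u₁) (A₂ *ᵥ u₂) v₁ v₂ := by
  simp [outerBlocks, fromBlocks_multiply, mul_vecMulVec]

theorem outerBlocks_mul_fromBlocks (B₁ : Matrix m m R) (B₂ : Matrix n n R)
    (M : Matrix (Fin 2) (Fin 2) R) :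
    outerBlocks M u₁ u₂ v₁ v₂ * fromBlocks B₁ 0 0 B₂ =
      outerBlocks M u₁ u₂ (v₁ ᵥ* B₁) (v₂ ᵥ* B₂) := by
  simp [outerBlocks, fromBlocks_multiply, vecMulVec_mul]

variable [DecidableEq m] [DecidableEq n]

theorem fromBlocks_add_outerBlocks_mul_eq_one {A₁ B₁ : Matrix m m R} {A₂ B₂ : Matrix n n R}
    (hA₁ : A₁ * B₁ = 1) (hA₂ : A₂ * B₂ = 1) {a₁ b₁ : m → R} {a₂ b₂ : n → R}
    (hb₁ : A₁ *ᵥ b₁ = a₁) (hb₂ : A₂ *ᵥ b₂ = a₂) (ha₁ : a₁ ᵥ* B₁ = b₁) (ha₂ : a₂ ᵥ* B₂ = b₂)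
    (C : Matrix (Fin 2) (Fin 2) R) {s : R}
    (hs : s * det (1 + diagonal ![a₁ ⬝ᵥ b₁, a₂ ⬝ᵥ b₂] * C) = 1) :
    (fromBlocks A₁ 0 0 A₂ + outerBlocks C a₁ a₂ a₁ a₂) *
      (fromBlocks B₁ 0 0 B₂ - s • outerBlocks
        (C * adjugate (1 + diagonal ![a₁ ⬝ᵥ b₁, a₂ ⬝ᵥ b₂] * C)) b₁ b₂ b₁ b₂) = 1 := by
  set D := fromBlocks A₁ 0 0 A₂
  set E := outerBlocks C a₁ a₂ a₁ a₂
  set F := outerBlocks (C * adjugate (1 + diagonal ![a₁ ⬝ᵥ b₁, a₂ ⬝ᵥ b₂] * C)) b₁ b₂ b₁ b₂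
  have hD : D * fromBlocks B₁ 0 0 B₂ = 1 := by
    simp [D, fromBlocks_multiply, hA₁, hA₂]
  calc (D + E) * (fromBlocks B₁ 0 0 B₂ - s • F)
      = D * fromBlocks B₁ 0 0 B₂ + (E * fromBlocks B₁ 0 0 B₂ - s • (D * F + E * F)) := by
        simp only [add_mul, mul_sub, Matrix.mul_smul, smul_add]; abel
    _ = 1 := by
      rw [hD, fromBlocks_mul_outerBlocks, outerBlocks_mul_fromBlocks, outerBlocks_mul_outerBlocks,
        hb₁, hb₂, ha₁, ha₂, outerBlocks_add, add_mul_mul_adjugate, smul_outerBlocks, smul_smul, hs,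
        one_smul, outerBlocks_sub, sub_self, outerBlocks_zero, add_zero]

end OuterBlocks

section Diagonal

variable {K ι : Type*} [Field K] [Fintype ι] [DecidableEq ι] {d : ι → K}

theorem diagonal_mul_diagonal_inv (hd : ∀ i, d i ≠ 0) :
    diagonal d * diagonal (fun i => (d i)⁻¹) = 1 := by
  rw [diagonal_mul_diagonal, ← diagonal_one]
  exact congrArg diagonal (funext fun i => mul_inv_cancel₀ (hd i))

theorem diagonal_mulVec_div (hd : ∀ i, d i ≠ 0) (a : ι → K) :
    diagonal d *ᵥ (fun i => a i / d i) = a :=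
  funext fun i => by rw [mulVec_diagonal, mul_div_cancel₀ _ (hd i)]

theorem vecMul_diagonal_inv (a : ι → K) :
    a ᵥ* diagonal (fun i => (d i)⁻¹) = fun i => a i / d i :=
  funext fun i => by rw [vecMul_diagonal, div_eq_mul_inv]

end Diagonal

end Matrix

theorem one_add_mul_one_add_sub_sq_mul_pos {q₁ q₂ θ : ℝ} (hq₁ : 0 < q₁) (hq₂ : 0 < q₂)
    (hθ : θ ^ 2 < (1 + q₁⁻¹) * (1 + q₂⁻¹)) : 0 < (1 + q₁) * (1 + q₂) - θ ^ 2 * q₁ * q₂ := by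
  have h : (1 + q₁) * (1 + q₂) - θ ^ 2 * q₁ * q₂ = q₁ * q₂ * ((1 + q₁⁻¹) * (1 + q₂⁻¹) - θ ^ 2) := by
    field_simp; ring
  rw [h]
  exact mul_pos (mul_pos hq₁ hq₂) (sub_pos.2 hθ)

/-- Explicit inverse of the two-block matrix
`R_θ = D + [a₁a₁ᵀ, θa₁a₂ᵀ; θa₂a₁ᵀ, a₂a₂ᵀ]` for `θ² < (1+q₁⁻¹)(1+q₂⁻¹)`. -/
theorem stmt_11 (n₁ n₂ : ℕ) (d₁ : Fin n₁ → ℝ) (d₂ : Fin n₂ → ℝ)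
    (hd₁ : ∀ j, 0 < d₁ j) (hd₂ : ∀ j, 0 < d₂ j)
    (a₁ : Fin n₁ → ℝ) (a₂ : Fin n₂ → ℝ)
    (q₁ q₂ : ℝ) (hq₁ : q₁ = ∑ j, a₁ j ^ 2 / d₁ j) (hq₂ : q₂ = ∑ j, a₂ j ^ 2 / d₂ j)
    (hq₁pos : 0 < q₁) (hq₂pos : 0 < q₂)
    (θ : ℝ) (hθ : θ ^ 2 < (1 + q₁⁻¹) * (1 + q₂⁻¹))
    (b₁ : Fin n₁ → ℝ) (b₂ : Fin n₂ → ℝ)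
    (hb₁ : ∀ j, b₁ j = a₁ j / d₁ j) (hb₂ : ∀ j, b₂ j = a₂ j / d₂ j)
    (Rθ X : Matrix (Fin n₁ ⊕ Fin n₂) (Fin n₁ ⊕ Fin n₂) ℝ)
    (hR : Rθ = Matrix.fromBlocks
      (Matrix.diagonal d₁ + Matrix.vecMulVec a₁ a₁) (θ • Matrix.vecMulVec a₁ a₂)
      (θ • Matrix.vecMulVec a₂ a₁) (Matrix.diagonal d₂ + Matrix.vecMulVec a₂ a₂))
    (hX : X = Matrix.fromBlocks
        (Matrix.diagonal fun j => (d₁ j)⁻¹) 0 0 (Matrix.diagonal fun j => (d₂ j)⁻¹) -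
      ((1 + q₁) * (1 + q₂) - θ ^ 2 * q₁ * q₂)⁻¹ • Matrix.fromBlocks
        ((1 + (1 - θ ^ 2) * q₂) • Matrix.vecMulVec b₁ b₁) (θ • Matrix.vecMulVec b₁ b₂)
        (θ • Matrix.vecMulVec b₂ b₁) ((1 + (1 - θ ^ 2) * q₁) • Matrix.vecMulVec b₂ b₂)) :
    Rθ * X = 1 ∧ X * Rθ = 1 := by
  obtain rfl : b₁ = fun j => a₁ j / d₁ j := funext hb₁
  obtain rfl : b₂ = fun j => a₂ j / d₂ j := funext hb₂
  have hq₁' : a₁ ⬝ᵥ (fun j => a₁ j / d₁ j) = q₁ := by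
    simp only [hq₁, dotProduct, sq, mul_div_assoc]
  have hq₂' : a₂ ⬝ᵥ (fun j => a₂ j / d₂ j) = q₂ := by
    simp only [hq₂, dotProduct, sq, mul_div_assoc]
  have hRX : Rθ * X = 1 := by
    have hd₁' j := (hd₁ j).ne'
    have hd₂' j := (hd₂ j).ne'
    have hΔ := one_add_mul_one_add_sub_sq_mul_pos hq₁pos hq₂pos hθ
    have hwoodbury := fromBlocks_add_outerBlocks_mul_eq_one
      (diagonal_mul_diagonal_inv hd₁') (diagonal_mul_diagonal_inv hd₂')
      (diagonal_mulVec_div hd₁' a₁) (diagonal_mulVec_div hd₂' a₂)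
      (vecMul_diagonal_inv a₁) (vecMul_diagonal_inv a₂) !![1, θ; θ, 1]
      (s := ((1 + q₁) * (1 + q₂) - θ ^ 2 * q₁ * q₂)⁻¹) (by
        rw [hq₁', hq₂', det_one_add_diagonal_mul_fin_two, inv_mul_cancel₀ hΔ.ne'])
    rw [hq₁', hq₂', mul_adjugate_one_add_diagonal_mul_fin_two] at hwoodbury
    convert hwoodbury using 2
    · rw [hR, outerBlocks, fromBlocks_add]; simp
    · rw [hX]; simp [outerBlocks]
  exact ⟨hRX, mul_eq_one_comm.mp hRX⟩
end

section
/- With R_θ⁻¹ as in the two-block structure (inverse equal to D⁻¹ minus a correction with positive coefficients times [(1+(1−θ²)q₂)b₁b₁ᵀ, θb₁b₂ᵀ; θb₂b₁ᵀ, (1+(1−θ²)q₁)b₂b₂ᵀ], with b₁, b₂ having positive entries), if 0 ≤ θ ≤ min(√(1+q₁⁻¹), √(1+q₂⁻¹)) then all off-diagonal entries of R_θ⁻¹ are nonpositive, i.e., R_θ⁻¹ is a Z-matrix (and hence, being the inverse of an entrywise nonnegative symmetric positive definite matrix, an M-matrix). -/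
open Matrix

/-- If `0 ≤ θ ≤ min(√(1+q₁⁻¹), √(1+q₂⁻¹))`, then the explicit inverse `R_θ⁻¹`
(two-block structure, with `b₁, b₂` entrywise positive) has all off-diagonal
entries nonpositive, i.e. it is a Z-matrix. -/
theorem stmt_12 (n₁ n₂ : ℕ) (d₁ : Fin n₁ → ℝ) (d₂ : Fin n₂ → ℝ)
    (hd₁ : ∀ j, 0 < d₁ j) (hd₂ : ∀ j, 0 < d₂ j)
    (q₁ q₂ : ℝ) (hq₁pos : 0 < q₁) (hq₂pos : 0 < q₂)
    (θ : ℝ) (hθ0 : 0 ≤ θ)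
    (hθ : θ ≤ min (Real.sqrt (1 + q₁⁻¹)) (Real.sqrt (1 + q₂⁻¹)))
    (hden : 0 < (1 + q₁) * (1 + q₂) - θ ^ 2 * q₁ * q₂)
    (b₁ : Fin n₁ → ℝ) (b₂ : Fin n₂ → ℝ)
    (hb₁ : ∀ j, 0 < b₁ j) (hb₂ : ∀ j, 0 < b₂ j)
    (X : Matrix (Fin n₁ ⊕ Fin n₂) (Fin n₁ ⊕ Fin n₂) ℝ)
    (hX : X = Matrix.fromBlocks
        (Matrix.diagonal fun j => (d₁ j)⁻¹) 0 0 (Matrix.diagonal fun j => (d₂ j)⁻¹) -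
      ((1 + q₁) * (1 + q₂) - θ ^ 2 * q₁ * q₂)⁻¹ • Matrix.fromBlocks
        ((1 + (1 - θ ^ 2) * q₂) • Matrix.vecMulVec b₁ b₁) (θ • Matrix.vecMulVec b₁ b₂)
        (θ • Matrix.vecMulVec b₂ b₁) ((1 + (1 - θ ^ 2) * q₁) • Matrix.vecMulVec b₂ b₂)) :
    ∀ i j : Fin n₁ ⊕ Fin n₂, i ≠ j → X i j ≤ 0 := by
  have hθ1 : θ ^ 2 ≤ 1 + q₁⁻¹ := by
    have := (Real.le_sqrt hθ0 (by positivity)).mp (le_trans hθ (min_le_left _ _))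
    linarith
  have hθ2 : θ ^ 2 ≤ 1 + q₂⁻¹ := by
    have := (Real.le_sqrt hθ0 (by positivity)).mp (le_trans hθ (min_le_right _ _))
    linarith
  have hc1 : 0 ≤ 1 + (1 - θ ^ 2) * q₂ := by
    have : θ ^ 2 * q₂ ≤ (1 + q₂⁻¹) * q₂ := by
      apply mul_le_mul_of_nonneg_right hθ2 hq₂pos.le
    rw [add_mul, inv_mul_cancel₀ hq₂pos.ne'] at this
    nlinarith
  have hc2 : 0 ≤ 1 + (1 - θ ^ 2) * q₁ := by
    have : θ ^ 2 * q₁ ≤ (1 + q₁⁻¹) * q₁ := by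
      apply mul_le_mul_of_nonneg_right hθ1 hq₁pos.le
    rw [add_mul, inv_mul_cancel₀ hq₁pos.ne'] at this
    nlinarith
  have hdinv : 0 ≤ ((1 + q₁) * (1 + q₂) - θ ^ 2 * q₁ * q₂)⁻¹ := inv_nonneg.mpr hden.le
  intro i j hij
  subst hX
  rcases i with i | i <;> rcases j with j | j <;>
    simp only [Matrix.sub_apply, Matrix.smul_apply, Matrix.fromBlocks_apply₁₁,
      Matrix.fromBlocks_apply₁₂, Matrix.fromBlocks_apply₂₁, Matrix.fromBlocks_apply₂₂,
      Matrix.diagonal_apply, Matrix.zero_apply, Matrix.vecMulVec_apply, smul_eq_mul]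
  · have hne : i ≠ j := fun h => hij (by rw [h])
    rw [if_neg hne]
    have : 0 ≤ ((1 + q₁) * (1 + q₂) - θ ^ 2 * q₁ * q₂)⁻¹ *
        ((1 + (1 - θ ^ 2) * q₂) * (b₁ i * b₁ j)) :=
      mul_nonneg hdinv (mul_nonneg hc1 (mul_nonneg (hb₁ i).le (hb₁ j).le))
    linarith
  · have : 0 ≤ ((1 + q₁) * (1 + q₂) - θ ^ 2 * q₁ * q₂)⁻¹ * (θ * (b₁ i * b₂ j)) :=
      mul_nonneg hdinv (mul_nonneg hθ0 (mul_nonneg (hb₁ i).le (hb₂ j).le))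
    linarith
  · have : 0 ≤ ((1 + q₁) * (1 + q₂) - θ ^ 2 * q₁ * q₂)⁻¹ * (θ * (b₂ i * b₁ j)) :=
      mul_nonneg hdinv (mul_nonneg hθ0 (mul_nonneg (hb₂ i).le (hb₁ j).le))
    linarith
  · have hne : i ≠ j := fun h => hij (by rw [h])
    rw [if_neg hne]
    have : 0 ≤ ((1 + q₁) * (1 + q₂) - θ ^ 2 * q₁ * q₂)⁻¹ *
        ((1 + (1 - θ ^ 2) * q₁) * (b₂ i * b₂ j)) :=
      mul_nonneg hdinv (mul_nonneg hc2 (mul_nonneg (hb₂ i).le (hb₂ j).le))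
    linarith
end

section
/- If g₁⁴ + g₂⁴ + g₃⁴ ≤ 1 with gⱼ ∈ [0,1) and g = g₁² + g₂² + g₃² − 2g₁g₂g₃ ∈ (0,1), then for all real t₁, t₂, t₃: (g² + (Σⱼ gⱼ²tⱼ)²) / ∏ⱼ(1+tⱼ²) < 1. -/
/-- Condition (A4): if `g₁⁴+g₂⁴+g₃⁴ ≤ 1` then `ρ²(t) < 1` for all real `t₁,t₂,t₃`. -/
theorem stmt_15 (g₁ g₂ g₃ : ℝ)
    (h₁ : g₁ ∈ Set.Ico (0:ℝ) 1) (h₂ : g₂ ∈ Set.Ico (0:ℝ) 1) (h₃ : g₃ ∈ Set.Ico (0:ℝ) 1)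
    (g : ℝ) (hg : g = g₁ ^ 2 + g₂ ^ 2 + g₃ ^ 2 - 2 * g₁ * g₂ * g₃)
    (hg01 : g ∈ Set.Ioo (0:ℝ) 1)
    (hA4 : g₁ ^ 4 + g₂ ^ 4 + g₃ ^ 4 ≤ 1) :
    ∀ t₁ t₂ t₃ : ℝ,
      (g ^ 2 + (g₁ ^ 2 * t₁ + g₂ ^ 2 * t₂ + g₃ ^ 2 * t₃) ^ 2) /
        ((1 + t₁ ^ 2) * (1 + t₂ ^ 2) * (1 + t₃ ^ 2)) < 1 := by
  intro t₁ t₂ t₃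
  obtain ⟨hg0, hg1⟩ := hg01
  have hden : (0:ℝ) < (1 + t₁ ^ 2) * (1 + t₂ ^ 2) * (1 + t₃ ^ 2) := by positivity
  rw [div_lt_one hden]
  have hg2 : g ^ 2 < 1 := by nlinarith
  have hcs : (g₁ ^ 2 * t₁ + g₂ ^ 2 * t₂ + g₃ ^ 2 * t₃) ^ 2 ≤
      (g₁ ^ 4 + g₂ ^ 4 + g₃ ^ 4) * (t₁ ^ 2 + t₂ ^ 2 + t₃ ^ 2) := by
    nlinarith [sq_nonneg (g₁^2*t₂ - g₂^2*t₁), sq_nonneg (g₁^2*t₃ - g₃^2*t₁),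
      sq_nonneg (g₂^2*t₃ - g₃^2*t₂)]
  have hq : (g₁ ^ 2 * t₁ + g₂ ^ 2 * t₂ + g₃ ^ 2 * t₃) ^ 2 ≤ t₁ ^ 2 + t₂ ^ 2 + t₃ ^ 2 := by
    nlinarith [sq_nonneg t₁, sq_nonneg t₂, sq_nonneg t₃]
  nlinarith [sq_nonneg (t₁*t₂), sq_nonneg (t₁*t₃), sq_nonneg (t₂*t₃),
    sq_nonneg (t₁*t₂*t₃)]
end

section
/- Let n = n₁ + n₂, Z = Diag(z₁,…,zₙ) with zⱼ = (1+(1−aⱼ²)tⱼ)^{−1} for tⱼ ≥ 0 and aⱼ ∈ (0,1), T = Diag(t₁,…,tₙ), and let R_θ be the two-block correlation matrix D + [a₁a₁ᵀ, θa₁a₂ᵀ; θa₂a₁ᵀ, a₂a₂ᵀ] with D = Diag(1−a₁²,…,1−aₙ²). Then det(Iₙ + R_θT) = det(Z)⁻¹ · (1 + q₁ + q₂ + (1−θ²)q₁q₂), where qᵢ = cᵢᵀcᵢ with cᵢ = (TᵢZᵢ)^{1/2}aᵢ for the i-th block. -/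
open Matrix

lemma det_one_add_two_vecMulVec {ι : Type*} [Fintype ι] [DecidableEq ι]
    (x y u v : ι → ℝ) :
    (1 + vecMulVec x y + vecMulVec u v).det =
      (1 + y ⬝ᵥ x) * (1 + v ⬝ᵥ u) - (y ⬝ᵥ u) * (v ⬝ᵥ x) := by
  set A : Matrix ι (Fin 2) ℝ := Matrix.of fun i k => ![x i, u i] k
  set B : Matrix (Fin 2) ι ℝ := Matrix.of fun k j => ![y j, v j] k
  have hAB : A * B = vecMulVec x y + vecMulVec u v := by
    ext i j
    simp [A, B, Matrix.mul_apply, Fin.sum_univ_two, vecMulVec_apply]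
  rw [add_assoc, ← hAB, Matrix.det_one_add_mul_comm]
  have : (1 + B * A) = Matrix.of ![![1 + y ⬝ᵥ x, y ⬝ᵥ u], ![v ⬝ᵥ x, 1 + v ⬝ᵥ u]] := by
    ext k l
    fin_cases k <;> fin_cases l <;>
      simp [A, B, Matrix.mul_apply, Matrix.one_apply, dotProduct, mul_comm]
  rw [this, Matrix.det_fin_two]
  simp

/-- Determinant identity `det(Iₙ + R_θT) = det(Z)⁻¹(1 + q₁ + q₂ + (1−θ²)q₁q₂)` for the
two-block correlation matrix `R_θ = D + [a₁a₁ᵀ, θa₁a₂ᵀ; θa₂a₁ᵀ, a₂a₂ᵀ]`,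
`D = Diag(1−aⱼ²)`, with `zⱼ = (1+(1−aⱼ²)tⱼ)⁻¹` and `qᵢ = Σⱼ tⱼzⱼaⱼ²` over block `i`. -/
theorem stmt_19 (n₁ n₂ : ℕ) (a₁ : Fin n₁ → ℝ) (a₂ : Fin n₂ → ℝ)
    (ha₁ : ∀ j, a₁ j ∈ Set.Ioo (0:ℝ) 1) (ha₂ : ∀ j, a₂ j ∈ Set.Ioo (0:ℝ) 1)
    (t₁ : Fin n₁ → ℝ) (t₂ : Fin n₂ → ℝ) (ht₁ : ∀ j, 0 ≤ t₁ j) (ht₂ : ∀ j, 0 ≤ t₂ j)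
    (z₁ : Fin n₁ → ℝ) (z₂ : Fin n₂ → ℝ)
    (hz₁ : ∀ j, z₁ j = (1 + (1 - a₁ j ^ 2) * t₁ j)⁻¹)
    (hz₂ : ∀ j, z₂ j = (1 + (1 - a₂ j ^ 2) * t₂ j)⁻¹)
    (θ : ℝ) (q₁ q₂ : ℝ)
    (hq₁ : q₁ = ∑ j, t₁ j * z₁ j * a₁ j ^ 2) (hq₂ : q₂ = ∑ j, t₂ j * z₂ j * a₂ j ^ 2)
    (Rθ T : Matrix (Fin n₁ ⊕ Fin n₂) (Fin n₁ ⊕ Fin n₂) ℝ)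
    (hR : Rθ = Matrix.fromBlocks
      (Matrix.diagonal (fun j => 1 - a₁ j ^ 2) + Matrix.vecMulVec a₁ a₁)
      (θ • Matrix.vecMulVec a₁ a₂)
      (θ • Matrix.vecMulVec a₂ a₁)
      (Matrix.diagonal (fun j => 1 - a₂ j ^ 2) + Matrix.vecMulVec a₂ a₂))
    (hT : T = Matrix.fromBlocks (Matrix.diagonal t₁) 0 0 (Matrix.diagonal t₂)) :
    (1 + Rθ * T).det =
      ((∏ j, z₁ j) * ∏ j, z₂ j)⁻¹ * (1 + q₁ + q₂ + (1 - θ ^ 2) * q₁ * q₂) := by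
  -- positivity of the diagonal entries
  have hw₁pos : ∀ j, 0 < 1 + (1 - a₁ j ^ 2) * t₁ j := fun j => by
    have h := ha₁ j
    have h1 : (0:ℝ) ≤ 1 - a₁ j ^ 2 := by nlinarith [h.1, h.2]
    have := mul_nonneg h1 (ht₁ j); linarith
  have hw₂pos : ∀ j, 0 < 1 + (1 - a₂ j ^ 2) * t₂ j := fun j => by
    have h := ha₂ j
    have h1 : (0:ℝ) ≤ 1 - a₂ j ^ 2 := by nlinarith [h.1, h.2]
    have := mul_nonneg h1 (ht₂ j); linarith
  have hwz₁ : ∀ j, (1 + (1 - a₁ j ^ 2) * t₁ j) * z₁ j = 1 := fun j => by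
    rw [hz₁ j]; exact mul_inv_cancel₀ (hw₁pos j).ne'
  have hwz₂ : ∀ j, (1 + (1 - a₂ j ^ 2) * t₂ j) * z₂ j = 1 := fun j => by
    rw [hz₂ j]; exact mul_inv_cancel₀ (hw₂pos j).ne'
  have hw₁ : ∀ j, (1 + (1 - a₁ j ^ 2) * t₁ j) ≠ 0 := fun j => (hw₁pos j).ne'
  have hw₂ : ∀ j, (1 + (1 - a₂ j ^ 2) * t₂ j) ≠ 0 := fun j => (hw₂pos j).ne'
  set w : Fin n₁ ⊕ Fin n₂ → ℝ :=
    Sum.elim (fun j => 1 + (1 - a₁ j ^ 2) * t₁ j) (fun j => 1 + (1 - a₂ j ^ 2) * t₂ j) with hw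
  set x : Fin n₁ ⊕ Fin n₂ → ℝ :=
    Sum.elim (fun j => z₁ j * a₁ j) (fun j => z₂ j * (θ * a₂ j)) with hx
  set y : Fin n₁ ⊕ Fin n₂ → ℝ :=
    Sum.elim (fun j => a₁ j * t₁ j) 0 with hy
  set u : Fin n₁ ⊕ Fin n₂ → ℝ :=
    Sum.elim (fun j => z₁ j * (θ * a₁ j)) (fun j => z₂ j * a₂ j) with hu
  set v : Fin n₁ ⊕ Fin n₂ → ℝ :=
    Sum.elim 0 (fun j => a₂ j * t₂ j) with hv
  have key : (1 : Matrix (Fin n₁ ⊕ Fin n₂) (Fin n₁ ⊕ Fin n₂) ℝ) + Rθ * T =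
      Matrix.diagonal w * (1 + vecMulVec x y + vecMulVec u v) := by
    subst hR hT
    rw [Matrix.fromBlocks_diagonal]
    ext i j
    rcases i with i | i <;> rcases j with j | j <;>
      simp only [Matrix.add_apply, Matrix.mul_diagonal, Matrix.diagonal_mul,
        Matrix.one_apply, Matrix.fromBlocks_apply₁₁, Matrix.fromBlocks_apply₁₂,
        Matrix.fromBlocks_apply₂₁, Matrix.fromBlocks_apply₂₂, Matrix.vecMulVec_apply,
        Matrix.smul_apply, Sum.elim_inl, Sum.elim_inr, Sum.inl.injEq, Sum.inr.injEq,
        Matrix.diagonal_apply, Pi.zero_apply, smul_eq_mul, hw, hx, hy, hu, hv,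
        reduceCtorEq, if_false]
    · rcases eq_or_ne i j with h | h
      · subst h; simp only [if_pos rfl, if_true]
        linear_combination (-(a₁ i ^ 2 * t₁ i)) * hwz₁ i
      · simp only [if_neg h]
        linear_combination (-(a₁ i * a₁ j * t₁ j)) * hwz₁ i
    · linear_combination (-(θ * a₁ i * a₂ j * t₂ j)) * hwz₁ i
    · linear_combination (-(θ * a₂ i * a₁ j * t₁ j)) * hwz₂ i
    · rcases eq_or_ne i j with h | h
      · subst h; simp only [if_pos rfl, if_true]
        linear_combination (-(a₂ i ^ 2 * t₂ i)) * hwz₂ i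
      · simp only [if_neg h]
        linear_combination (-(a₂ i * a₂ j * t₂ j)) * hwz₂ i
  rw [key, Matrix.det_mul, Matrix.det_diagonal, det_one_add_two_vecMulVec]
  have hprodw : ∏ i, w i =
      ((∏ j, z₁ j) * ∏ j, z₂ j)⁻¹ := by
    rw [Fintype.prod_sum_type]
    simp only [hw, Sum.elim_inl, Sum.elim_inr]
    rw [mul_inv, ← Finset.prod_inv_distrib, ← Finset.prod_inv_distrib]
    congr 1 <;> apply Finset.prod_congr rfl <;> intro j _
    · rw [hz₁ j, inv_inv]
    · rw [hz₂ j, inv_inv]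
  have hyx : y ⬝ᵥ x = q₁ := by
    rw [hq₁]; simp only [dotProduct, Fintype.sum_sum_type, hx, hy,
      Sum.elim_inl, Sum.elim_inr, Pi.zero_apply, zero_mul, Finset.sum_const_zero, add_zero]
    exact Finset.sum_congr rfl fun j _ => by ring
  have hvu : v ⬝ᵥ u = q₂ := by
    rw [hq₂]; simp only [dotProduct, Fintype.sum_sum_type, hu, hv,
      Sum.elim_inl, Sum.elim_inr, Pi.zero_apply, zero_mul, Finset.sum_const_zero, zero_add]
    exact Finset.sum_congr rfl fun j _ => by ring
  have hyu : y ⬝ᵥ u = θ * q₁ := by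
    rw [hq₁, Finset.mul_sum]; simp only [dotProduct, Fintype.sum_sum_type, hu, hy,
      Sum.elim_inl, Sum.elim_inr, Pi.zero_apply, zero_mul, Finset.sum_const_zero, add_zero]
    exact Finset.sum_congr rfl fun j _ => by ring
  have hvx : v ⬝ᵥ x = θ * q₂ := by
    rw [hq₂, Finset.mul_sum]; simp only [dotProduct, Fintype.sum_sum_type, hx, hv,
      Sum.elim_inl, Sum.elim_inr, Pi.zero_apply, zero_mul, Finset.sum_const_zero, zero_add]
    exact Finset.sum_congr rfl fun j _ => by ring
  rw [hprodw, hyx, hvu, hyu, hvx]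
  ring
end
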